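/- arXiv:2509.06193 — 15 statements merged into one kernel-verified Lean document; each statement's English description precedes it below -/
import Mathlib

section
/- Let (X;μ,η) be a monoid in Rel. Then for every a ∈ X there is a unique element t ∈ X with t ∈ η and μ:(t,a)↦a (the target of a), and a unique element s ∈ X with s ∈ η and μ:(a,s)↦a (the source of a). -/
/-! Two units that compose must coincide: if `μ:(r,r')↦x` with `r, r' ∈ η`, then
`x = r'` because `r` is a left unit and `x = r` because `r'` is a right unit.
If `t, t'` are targets of `a`, then `μ:(t',(t,a))↦a`, so associativity yields some
`x` with `μ:(t',t)↦x`, whence `t' = t`. Sources are targets for the opposite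
relation `μ:(b,a)↦c`. -/

section RelMonoid

variable {X : Type*} (μ : X → X → X → Prop) (η : Set X)

theorem eq_of_unit_mul_unit
    (hunitL : ∀ a b : X, (∃ r ∈ η, μ r a b) ↔ a = b)
    (hunitR : ∀ a b : X, (∃ r ∈ η, μ a r b) ↔ a = b)
    {r r' x : X} (hr : r ∈ η) (hr' : r' ∈ η) (h : μ r r' x) : r = r' :=
  ((hunitR r x).mp ⟨r', hr', h⟩).trans ((hunitL r' x).mp ⟨r, hr, h⟩).symm

theorem existsUnique_target
    (hassoc : ∀ a b c d : X, (∃ x, μ a b x ∧ μ x c d) ↔ (∃ y, μ b c y ∧ μ a y d))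
    (hunitL : ∀ a b : X, (∃ r ∈ η, μ r a b) ↔ a = b)
    (hunitR : ∀ a b : X, (∃ r ∈ η, μ a r b) ↔ a = b) (a : X) :
    ∃! t : X, t ∈ η ∧ μ t a a := by
  obtain ⟨t, ht, hta⟩ := (hunitL a a).mpr rfl
  refine ⟨t, ⟨ht, hta⟩, ?_⟩
  rintro t' ⟨ht', ht'a⟩
  obtain ⟨x, ht't, -⟩ := (hassoc t' t a a).mpr ⟨a, hta, ht'a⟩
  exact eq_of_unit_mul_unit μ η hunitL hunitR ht' ht ht't

end RelMonoid

/-- In a monoid (X;μ,η) in Rel, every element `a` has a unique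
target `t ∈ η` with `μ:(t,a)↦a` and a unique source `s ∈ η` with `μ:(a,s)↦a`. -/
theorem relMonoid_unique_target_and_source
    {X : Type*} (μ : X → X → X → Prop) (η : Set X)
    (hassoc : ∀ a b c d : X,
      (∃ x, μ a b x ∧ μ x c d) ↔ (∃ y, μ b c y ∧ μ a y d))
    (hunitL : ∀ a b : X, (∃ r ∈ η, μ r a b) ↔ a = b)
    (hunitR : ∀ a b : X, (∃ r ∈ η, μ a r b) ↔ a = b) :
    ∀ a : X, (∃! t : X, t ∈ η ∧ μ t a a) ∧ (∃! s : X, s ∈ η ∧ μ a s a) := fun a =>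
  ⟨existsUnique_target μ η hassoc hunitL hunitR a,
    existsUnique_target (fun a b c => μ b a c) η (fun a b c d => (hassoc c b a d).symm)
      hunitR hunitL a⟩
end

section
/- Let (X;μ,η,δ,ε) be a Frobenius algebra in Rel. Then the relation α is the graph of a bijection: for every x ∈ X there is a unique y ∈ X with (x,y) ∈ α, and for every y ∈ X there is a unique x ∈ X with (x,y) ∈ α. -/
/-!
The cap `(x, y) ↦ ∃ e ∈ ε, μ x y e` and the cup `(x, y) ↦ ∃ r ∈ η, δ r x y` satisfy the two
snake (zigzag) identities: each follows from one form of the Frobenius law together with a unit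
and a counit law. Hence cap and cup are mutually inverse relations, and a relation with a
two-sided inverse in Rel is the graph of a bijection.
-/

local infixr:80 " ∘r " => Relation.Comp

section InverseRelations

variable {X : Type*} {R S : X → X → Prop}

theorem existsUnique_right_of_comp_eq_eq (hRS : R ∘r S = (· = ·)) (hSR : S ∘r R = (· = ·))
    (x : X) : ∃! y, R x y := by
  obtain ⟨y, hxy, -⟩ := (congrFun₂ hRS x x).mpr rfl
  refine ⟨y, hxy, fun y' hxy' => ?_⟩
  obtain ⟨z, hyz, -⟩ := (congrFun₂ hSR y y).mpr rfl
  obtain rfl : x = z := (congrFun₂ hRS x z).mp ⟨y, hxy, hyz⟩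
  exact ((congrFun₂ hSR y y').mp ⟨x, hyz, hxy'⟩).symm

theorem existsUnique_left_of_comp_eq_eq (hRS : R ∘r S = (· = ·)) (hSR : S ∘r R = (· = ·))
    (y : X) : ∃! x, R x y := by
  have flip_eq : flip (· = · : X → X → Prop) = (· = ·) := funext₂ fun _ _ => propext eq_comm
  refine existsUnique_right_of_comp_eq_eq (R := flip R) (S := flip S) ?_ ?_ y
  · rw [← Relation.flip_comp, hSR, flip_eq]
  · rw [← Relation.flip_comp, hRS, flip_eq]

end InverseRelations

namespace RelFrobenius

variable {X : Type*} (μ δ : X → X → X → Prop) (η ε : Set X)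

def cap (x y : X) : Prop := ∃ e ∈ ε, μ x y e

def cup (x y : X) : Prop := ∃ r ∈ η, δ r x y

variable {μ δ η ε}

theorem cap_comp_cup
    (hunitR : ∀ a b : X, (∃ r ∈ η, μ a r b) ↔ a = b)
    (hcounitL : ∀ a b : X, (∃ e ∈ ε, δ a e b) ↔ a = b)
    (hfrob₁ : ∀ a b y z : X, (∃ c, μ a b c ∧ δ c y z) ↔ (∃ u, δ b u z ∧ μ a u y)) :
    cap μ ε ∘r cup δ η = (· = ·) := by
  funext a b
  apply propext
  constructor
  · rintro ⟨x, ⟨e, he, hμ⟩, ⟨r, hr, hδ⟩⟩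
    obtain ⟨c, hμc, hδc⟩ := (hfrob₁ a r e b).mpr ⟨x, hδ, hμ⟩
    obtain rfl : a = c := (hunitR a c).mp ⟨r, hr, hμc⟩
    exact (hcounitL a b).mp ⟨e, he, hδc⟩
  · rintro rfl
    obtain ⟨r, hr, hμ⟩ := (hunitR a a).mpr rfl
    obtain ⟨e, he, hδ⟩ := (hcounitL a a).mpr rfl
    obtain ⟨u, hδu, hμu⟩ := (hfrob₁ a r e a).mp ⟨a, hμ, hδ⟩
    exact ⟨u, ⟨e, he, hμu⟩, ⟨r, hr, hδu⟩⟩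

theorem cup_comp_cap
    (hunitL : ∀ a b : X, (∃ r ∈ η, μ r a b) ↔ a = b)
    (hcounitR : ∀ a b : X, (∃ e ∈ ε, δ a b e) ↔ a = b)
    (hfrob₂ : ∀ a b y z : X, (∃ c, μ a b c ∧ δ c y z) ↔ (∃ v, δ a y v ∧ μ v b z)) :
    cup δ η ∘r cap μ ε = (· = ·) := by
  funext a b
  apply propext
  constructor
  · rintro ⟨y, ⟨r, hr, hδ⟩, ⟨e, he, hμ⟩⟩
    obtain ⟨c, hμc, hδc⟩ := (hfrob₂ r b a e).mpr ⟨y, hδ, hμ⟩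
    obtain rfl : b = c := (hunitL b c).mp ⟨r, hr, hμc⟩
    exact ((hcounitR b a).mp ⟨e, he, hδc⟩).symm
  · rintro rfl
    obtain ⟨r, hr, hμ⟩ := (hunitL a a).mpr rfl
    obtain ⟨e, he, hδ⟩ := (hcounitR a a).mpr rfl
    obtain ⟨v, hδv, hμv⟩ := (hfrob₂ r a a e).mp ⟨a, hμ, hδ⟩
    exact ⟨v, ⟨r, hr, hδv⟩, ⟨e, he, hμv⟩⟩

end RelFrobenius

open RelFrobenius in
theorem relFrobenius_alpha_graph_of_bijection_general
    {X : Type*} (μ δ : X → X → X → Prop) (η ε : Set X)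
    (hunitL : ∀ a b : X, (∃ r ∈ η, μ r a b) ↔ a = b)
    (hunitR : ∀ a b : X, (∃ r ∈ η, μ a r b) ↔ a = b)
    (hcounitL : ∀ a b : X, (∃ e ∈ ε, δ a e b) ↔ a = b)
    (hcounitR : ∀ a b : X, (∃ e ∈ ε, δ a b e) ↔ a = b)
    (hfrob₁ : ∀ a b y z : X,
      (∃ c, μ a b c ∧ δ c y z) ↔ (∃ u, δ b u z ∧ μ a u y))
    (hfrob₂ : ∀ a b y z : X,
      (∃ c, μ a b c ∧ δ c y z) ↔ (∃ v, δ a y v ∧ μ v b z)) :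
    (∀ x : X, ∃! y : X, ∃ e ∈ ε, μ x y e) ∧
    (∀ y : X, ∃! x : X, ∃ e ∈ ε, μ x y e) :=
  have hcapcup := cap_comp_cup hunitR hcounitL hfrob₁
  have hcupcap := cup_comp_cap hunitL hcounitR hfrob₂
  ⟨existsUnique_right_of_comp_eq_eq hcapcup hcupcap,
    existsUnique_left_of_comp_eq_eq hcapcup hcupcap⟩

/-- In a Frobenius algebra (X;μ,η,δ,ε) in Rel, the relation
α (defined by (x,y) ∈ α iff ∃ e ∈ ε, μ:(x,y)↦e) is the graph of a bijection. -/
theorem relFrobenius_alpha_graph_of_bijection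
    {X : Type*} (μ δ : X → X → X → Prop) (η ε : Set X)
    (hassoc : ∀ a b c d : X,
      (∃ x, μ a b x ∧ μ x c d) ↔ (∃ y, μ b c y ∧ μ a y d))
    (hunitL : ∀ a b : X, (∃ r ∈ η, μ r a b) ↔ a = b)
    (hunitR : ∀ a b : X, (∃ r ∈ η, μ a r b) ↔ a = b)
    (hcoassoc : ∀ a x y z : X,
      (∃ u, δ a u z ∧ δ u x y) ↔ (∃ v, δ a x v ∧ δ v y z))
    (hcounitL : ∀ a b : X, (∃ e ∈ ε, δ a e b) ↔ a = b)
    (hcounitR : ∀ a b : X, (∃ e ∈ ε, δ a b e) ↔ a = b)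
    (hfrob₁ : ∀ a b y z : X,
      (∃ c, μ a b c ∧ δ c y z) ↔ (∃ u, δ b u z ∧ μ a u y))
    (hfrob₂ : ∀ a b y z : X,
      (∃ c, μ a b c ∧ δ c y z) ↔ (∃ v, δ a y v ∧ μ v b z)) :
    (∀ x : X, ∃! y : X, ∃ e ∈ ε, μ x y e) ∧
    (∀ y : X, ∃! x : X, ∃ e ∈ ε, μ x y e) :=
  relFrobenius_alpha_graph_of_bijection_general μ δ η ε hunitL hunitR hcounitL hcounitR hfrob₁
    hfrob₂
end

section
/- Let (X;μ,η,δ,ε) be a Frobenius algebra in Rel and let r ∈ η. Then for every e ∈ X: (e ∈ ε and μ:(r,e)↦e) if and only if (r,e) ∈ α; and (e ∈ ε and μ:(e,r)↦e) if and only if (e,r) ∈ α. In particular, there is a unique counit element e ∈ ε with μ:(r,e)↦e (i.e., with target r), and a unique counit element e' ∈ ε with μ:(e',r)↦e' (i.e., with source r). -/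
/-! For r ∈ η the relation μ(r, -, -) is contained in the identity, so `(r, e) ∈ α` already
forces `μ r e e`. A counit element e with `δ r e r` is then a fixed point of `μ r` by the
Frobenius law applied to `μ r r' r` (with r' ∈ η), and any other counit fixed point g
satisfies `δ g e g` by the other Frobenius law, whence g = e by counitality.
The statements about sources follow by reversing the order of μ and δ. -/

structure IsUnitalFrobenius {X : Type*} (μ δ : X → X → X → Prop) (η ε : Set X) : Prop where
  unit_left : ∀ a b : X, (∃ r ∈ η, μ r a b) ↔ a = b
  unit_right : ∀ a b : X, (∃ r ∈ η, μ a r b) ↔ a = b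
  counit_left : ∀ a b : X, (∃ e ∈ ε, δ a e b) ↔ a = b
  counit_right : ∀ a b : X, (∃ e ∈ ε, δ a b e) ↔ a = b
  frobenius_left : ∀ a b y z : X, (∃ c, μ a b c ∧ δ c y z) ↔ (∃ u, δ b u z ∧ μ a u y)
  frobenius_right : ∀ a b y z : X, (∃ c, μ a b c ∧ δ c y z) ↔ (∃ v, δ a y v ∧ μ v b z)

namespace IsUnitalFrobenius

variable {X : Type*} {μ δ : X → X → X → Prop} {η ε : Set X}

theorem swap (F : IsUnitalFrobenius μ δ η ε) :
    IsUnitalFrobenius (fun a b c => μ b a c) (fun a y z => δ a z y) η ε where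
  unit_left := F.unit_right
  unit_right := F.unit_left
  counit_left := F.counit_right
  counit_right := F.counit_left
  frobenius_left a b y z := F.frobenius_right b a z y
  frobenius_right a b y z := F.frobenius_left b a z y

theorem eq_of_unit_mul (hunit : ∀ a b : X, (∃ r ∈ η, μ r a b) ↔ a = b)
    {r a b : X} (hr : r ∈ η) (h : μ r a b) : a = b :=
  (hunit a b).1 ⟨r, hr, h⟩

theorem counit_unit_mul_iff (hunit : ∀ a b : X, (∃ r ∈ η, μ r a b) ↔ a = b)
    {r : X} (hr : r ∈ η) (e : X) : (e ∈ ε ∧ μ r e e) ↔ ∃ f ∈ ε, μ r e f := by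
  refine ⟨fun ⟨he, hm⟩ => ⟨e, he, hm⟩, ?_⟩
  rintro ⟨f, hf, hm⟩
  obtain rfl := eq_of_unit_mul hunit hr hm
  exact ⟨hf, hm⟩

theorem exists_counit_comul_unit_mul (F : IsUnitalFrobenius μ δ η ε) {r : X} (hr : r ∈ η) :
    ∃ e ∈ ε, δ r e r ∧ μ r e e := by
  obtain ⟨r', -, hrr'⟩ := (F.unit_right r r).2 rfl
  obtain ⟨e, he, hre⟩ := (F.counit_left r r).2 rfl
  obtain ⟨u, -, hru⟩ := (F.frobenius_left r r' e r).1 ⟨r, hrr', hre⟩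
  obtain rfl := eq_of_unit_mul F.unit_left hr hru
  exact ⟨u, he, hre, hru⟩

theorem eq_of_counit_unit_mul (F : IsUnitalFrobenius μ δ η ε) {r e g : X} (hr : r ∈ η)
    (hre : δ r e r) (hg : g ∈ ε) (hrg : μ r g g) : g = e := by
  obtain ⟨c, hgc, hce⟩ := (F.frobenius_right r g e g).2 ⟨r, hre, hrg⟩
  obtain rfl := eq_of_unit_mul F.unit_left hr hgc
  exact (F.counit_right g e).1 ⟨g, hg, hce⟩

theorem existsUnique_counit_unit_mul (F : IsUnitalFrobenius μ δ η ε) {r : X} (hr : r ∈ η) :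
    ∃! e, e ∈ ε ∧ μ r e e :=
  let ⟨e, he, hre, hrm⟩ := F.exists_counit_comul_unit_mul hr
  ⟨e, ⟨he, hrm⟩, fun _ ⟨hg, hrg⟩ => F.eq_of_counit_unit_mul hr hre hg hrg⟩

end IsUnitalFrobenius

theorem relFrobenius_counit_of_unit_general
    {X : Type*} (μ δ : X → X → X → Prop) (η ε : Set X)
    (hunitL : ∀ a b : X, (∃ r ∈ η, μ r a b) ↔ a = b)
    (hunitR : ∀ a b : X, (∃ r ∈ η, μ a r b) ↔ a = b)
    (hcounitL : ∀ a b : X, (∃ e ∈ ε, δ a e b) ↔ a = b)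
    (hcounitR : ∀ a b : X, (∃ e ∈ ε, δ a b e) ↔ a = b)
    (hfrob₁ : ∀ a b y z : X,
      (∃ c, μ a b c ∧ δ c y z) ↔ (∃ u, δ b u z ∧ μ a u y))
    (hfrob₂ : ∀ a b y z : X,
      (∃ c, μ a b c ∧ δ c y z) ↔ (∃ v, δ a y v ∧ μ v b z)) :
    ∀ r ∈ η,
      (∀ e : X, (e ∈ ε ∧ μ r e e) ↔ (∃ f ∈ ε, μ r e f)) ∧
      (∀ e : X, (e ∈ ε ∧ μ e r e) ↔ (∃ f ∈ ε, μ e r f)) ∧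
      (∃! e : X, e ∈ ε ∧ μ r e e) ∧
      (∃! e : X, e ∈ ε ∧ μ e r e) := by
  intro r hr
  have F : IsUnitalFrobenius μ δ η ε := ⟨hunitL, hunitR, hcounitL, hcounitR, hfrob₁, hfrob₂⟩
  exact ⟨IsUnitalFrobenius.counit_unit_mul_iff F.unit_left hr,
    IsUnitalFrobenius.counit_unit_mul_iff F.swap.unit_left hr,
    F.existsUnique_counit_unit_mul hr, F.swap.existsUnique_counit_unit_mul hr⟩

/-- In a Frobenius algebra in Rel, for a unit element r ∈ η:
an element e is a counit element with target r iff (r,e) ∈ α; and e is a counit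
element with source r iff (e,r) ∈ α. In particular, there is a unique counit
element with target r and a unique one with source r. -/
theorem relFrobenius_counit_of_unit
    {X : Type*} (μ δ : X → X → X → Prop) (η ε : Set X)
    (hassoc : ∀ a b c d : X,
      (∃ x, μ a b x ∧ μ x c d) ↔ (∃ y, μ b c y ∧ μ a y d))
    (hunitL : ∀ a b : X, (∃ r ∈ η, μ r a b) ↔ a = b)
    (hunitR : ∀ a b : X, (∃ r ∈ η, μ a r b) ↔ a = b)
    (hcoassoc : ∀ a x y z : X,
      (∃ u, δ a u z ∧ δ u x y) ↔ (∃ v, δ a x v ∧ δ v y z))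
    (hcounitL : ∀ a b : X, (∃ e ∈ ε, δ a e b) ↔ a = b)
    (hcounitR : ∀ a b : X, (∃ e ∈ ε, δ a b e) ↔ a = b)
    (hfrob₁ : ∀ a b y z : X,
      (∃ c, μ a b c ∧ δ c y z) ↔ (∃ u, δ b u z ∧ μ a u y))
    (hfrob₂ : ∀ a b y z : X,
      (∃ c, μ a b c ∧ δ c y z) ↔ (∃ v, δ a y v ∧ μ v b z)) :
    ∀ r ∈ η,
      (∀ e : X, (e ∈ ε ∧ μ r e e) ↔ (∃ f ∈ ε, μ r e f)) ∧
      (∀ e : X, (e ∈ ε ∧ μ e r e) ↔ (∃ f ∈ ε, μ e r f)) ∧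
      (∃! e : X, e ∈ ε ∧ μ r e e) ∧
      (∃! e : X, e ∈ ε ∧ μ e r e) :=
  relFrobenius_counit_of_unit_general μ δ η ε hunitL hunitR hcounitL hcounitR hfrob₁ hfrob₂
end

section
/- Let (X;μ,η,δ,ε) be a Frobenius algebra in Rel. Then for all x,y,z ∈ X the following three statements are pairwise equivalent: (1) δ:x↦(y,z); (2) there exists w ∈ X with (z,w) ∈ α and μ:(x,w)↦y; (3) there exists w ∈ X with (w,y) ∈ α and μ:(w,x)↦z. -/
/-!
In Rel the cap `r ∈ η, δ r a b` and the cup `e ∈ ε, μ b a e` are converse relations. For each `b`,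
the Frobenius law applied to `b · 1 = b` yields `u` with `μ b u` in `ε`, and applied once more to a
cap `δ r a b` it forces `u = a`; the other inclusion is the same argument in the dual algebra.
The characterisation of `δ` is then the snake identity `δ x = (μ x ⊗ id) ∘ cap` with the cap
replaced by the converse of the cup, and the second equivalence is the first one for the
opposite algebra.
-/

structure IsRelFrobenius {X : Type*} (μ δ : X → X → X → Prop) (η ε : Set X) : Prop where
  unitL : ∀ a b : X, (∃ r ∈ η, μ r a b) ↔ a = b
  unitR : ∀ a b : X, (∃ r ∈ η, μ a r b) ↔ a = b
  counitL : ∀ a b : X, (∃ e ∈ ε, δ a e b) ↔ a = b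
  counitR : ∀ a b : X, (∃ e ∈ ε, δ a b e) ↔ a = b
  frob₁ : ∀ a b y z : X, (∃ c, μ a b c ∧ δ c y z) ↔ (∃ u, δ b u z ∧ μ a u y)
  frob₂ : ∀ a b y z : X, (∃ c, μ a b c ∧ δ c y z) ↔ (∃ v, δ a y v ∧ μ v b z)

namespace IsRelFrobenius

variable {X : Type*} {μ δ : X → X → X → Prop} {η ε : Set X}

theorem dual (h : IsRelFrobenius μ δ η ε) :
    IsRelFrobenius (fun a b c => δ c a b) (fun a b c => μ b c a) ε η where
  unitL a b := (h.counitL b a).trans eq_comm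
  unitR a b := (h.counitR b a).trans eq_comm
  counitL a b := (h.unitL b a).trans eq_comm
  counitR a b := (h.unitR b a).trans eq_comm
  frob₁ a b y z := by
    simpa only [and_comm] using h.frob₂ y z a b
  frob₂ a b y z := by
    simpa only [and_comm] using h.frob₁ y z a b

theorem op (h : IsRelFrobenius μ δ η ε) :
    IsRelFrobenius (fun a b c => μ b a c) (fun a b c => δ a c b) η ε where
  unitL := h.unitR
  unitR := h.unitL
  counitL := h.counitR
  counitR := h.counitL
  frob₁ a b y z := h.frob₂ b a z y
  frob₂ a b y z := h.frob₁ b a z y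

theorem exists_counit_mul_of_unit_comul (h : IsRelFrobenius μ δ η ε) {a b r : X} (hr : r ∈ η)
    (hrab : δ r a b) : ∃ e ∈ ε, μ b a e := by
  obtain ⟨r₁, -, hb₁⟩ := (h.unitR b b).mpr rfl
  obtain ⟨e, he, hb₂⟩ := (h.counitL b b).mpr rfl
  obtain ⟨u, -, hbu⟩ := (h.frob₁ b r₁ e b).mp ⟨b, hb₁, hb₂⟩
  obtain ⟨c, hrc, hca⟩ := (h.frob₂ r u a e).mpr ⟨b, hrab, hbu⟩
  obtain rfl : u = c := (h.unitL u c).mp ⟨r, hr, hrc⟩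
  obtain rfl : u = a := (h.counitR u a).mp ⟨e, he, hca⟩
  exact ⟨e, he, hbu⟩

theorem exists_unit_comul_of_counit_mul (h : IsRelFrobenius μ δ η ε) {a b e : X} (he : e ∈ ε)
    (habe : μ a b e) : ∃ r ∈ η, δ r b a :=
  h.dual.exists_counit_mul_of_unit_comul he habe

theorem comul_iff (h : IsRelFrobenius μ δ η ε) (x y z : X) :
    δ x y z ↔ ∃ w : X, (∃ e ∈ ε, μ z w e) ∧ μ x w y := by
  obtain ⟨r, hr, hxr⟩ := (h.unitR x x).mpr rfl
  constructor
  · intro hxyz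
    obtain ⟨w, hrwz, hxwy⟩ := (h.frob₁ x r y z).mp ⟨x, hxr, hxyz⟩
    exact ⟨w, h.exists_counit_mul_of_unit_comul hr hrwz, hxwy⟩
  · rintro ⟨w, ⟨e, he, hzwe⟩, hxwy⟩
    obtain ⟨r', hr', hr'wz⟩ := h.exists_unit_comul_of_counit_mul he hzwe
    obtain ⟨c, hxr'c, hcyz⟩ := (h.frob₁ x r' y z).mpr ⟨w, hr'wz, hxwy⟩
    obtain rfl : x = c := (h.unitR x c).mp ⟨r', hr', hxr'c⟩
    exact hcyz

end IsRelFrobenius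

theorem relFrobenius_delta_characterization_general
    {X : Type*} (μ δ : X → X → X → Prop) (η ε : Set X)
    (hunitL : ∀ a b : X, (∃ r ∈ η, μ r a b) ↔ a = b)
    (hunitR : ∀ a b : X, (∃ r ∈ η, μ a r b) ↔ a = b)
    (hcounitL : ∀ a b : X, (∃ e ∈ ε, δ a e b) ↔ a = b)
    (hcounitR : ∀ a b : X, (∃ e ∈ ε, δ a b e) ↔ a = b)
    (hfrob₁ : ∀ a b y z : X,
      (∃ c, μ a b c ∧ δ c y z) ↔ (∃ u, δ b u z ∧ μ a u y))
    (hfrob₂ : ∀ a b y z : X,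
      (∃ c, μ a b c ∧ δ c y z) ↔ (∃ v, δ a y v ∧ μ v b z)) :
    ∀ x y z : X,
      (δ x y z ↔ ∃ w : X, (∃ e ∈ ε, μ z w e) ∧ μ x w y) ∧
      (δ x y z ↔ ∃ w : X, (∃ e ∈ ε, μ w y e) ∧ μ w x z) := by
  have h : IsRelFrobenius μ δ η ε := ⟨hunitL, hunitR, hcounitL, hcounitR, hfrob₁, hfrob₂⟩
  exact fun x y z => ⟨h.comul_iff x y z, h.op.comul_iff x z y⟩

/-- In a Frobenius algebra in Rel, for all x,y,z the following are
pairwise equivalent: (1) δ:x↦(y,z); (2) ∃ w, (z,w) ∈ α and μ:(x,w)↦y;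
(3) ∃ w, (w,y) ∈ α and μ:(w,x)↦z.  Here (x,y) ∈ α iff ∃ e ∈ ε, μ:(x,y)↦e. -/
theorem relFrobenius_delta_characterization
    {X : Type*} (μ δ : X → X → X → Prop) (η ε : Set X)
    (hassoc : ∀ a b c d : X,
      (∃ x, μ a b x ∧ μ x c d) ↔ (∃ y, μ b c y ∧ μ a y d))
    (hunitL : ∀ a b : X, (∃ r ∈ η, μ r a b) ↔ a = b)
    (hunitR : ∀ a b : X, (∃ r ∈ η, μ a r b) ↔ a = b)
    (hcoassoc : ∀ a x y z : X,
      (∃ u, δ a u z ∧ δ u x y) ↔ (∃ v, δ a x v ∧ δ v y z))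
    (hcounitL : ∀ a b : X, (∃ e ∈ ε, δ a e b) ↔ a = b)
    (hcounitR : ∀ a b : X, (∃ e ∈ ε, δ a b e) ↔ a = b)
    (hfrob₁ : ∀ a b y z : X,
      (∃ c, μ a b c ∧ δ c y z) ↔ (∃ u, δ b u z ∧ μ a u y))
    (hfrob₂ : ∀ a b y z : X,
      (∃ c, μ a b c ∧ δ c y z) ↔ (∃ v, δ a y v ∧ μ v b z)) :
    ∀ x y z : X,
      (δ x y z ↔ ∃ w : X, (∃ e ∈ ε, μ z w e) ∧ μ x w y) ∧
      (δ x y z ↔ ∃ w : X, (∃ e ∈ ε, μ w y e) ∧ μ w x z) :=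
  relFrobenius_delta_characterization_general μ δ η ε hunitL hunitR hcounitL hcounitR hfrob₁ hfrob₂
end

section
/- Let X be a set with ternary relations μ (write μ:(a,b)↦c) and δ (write δ:a↦(b,c)) and subsets η, ε ⊆ X satisfying: the unit law (for all a,b, (∃r∈η, μ:(r,a)↦b) iff a=b, and (∃r∈η, μ:(a,r)↦b) iff a=b), the counit law (for all a,b, (∃e∈ε, δ:a↦(e,b)) iff a=b, and (∃e∈ε, δ:a↦(b,e)) iff a=b), and the Frobenius identity (for all a,b,y,z, the statements (∃c, μ:(a,b)↦c and δ:c↦(y,z)), (∃u, δ:b↦(u,z) and μ:(a,u)↦y), (∃v, δ:a↦(y,v) and μ:(v,b)↦z) are pairwise equivalent). Then μ is associative, i.e., for all a,b,c,d, (∃x, μ:(a,b)↦x and μ:(x,c)↦d) iff (∃y, μ:(b,c)↦y and μ:(a,y)↦d), and δ is coassociative, i.e., for all a,x,y,z, (∃u, δ:a↦(u,z) and δ:u↦(x,y)) iff (∃v, δ:a↦(x,v) and δ:v↦(y,z)). -/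
/-!
Associativity is proved by inserting a counit, sliding the comultiplication through the two
multiplications with the Frobenius identity, and removing the counit again; this gives one
direction, and the other is its left–right mirror image. The axioms are self-dual under
`μ' (a, b) ↦ c := δ : c ↦ (a, b)`, `δ' : a ↦ (b, c) := μ (b, c) ↦ a`, which exchanges the unit
and counit laws, so coassociativity of `δ` is associativity of `μ'`.
-/

namespace RelFrobenius

variable {X : Type*} {μ δ : X → X → X → Prop} {η ε : Set X}

theorem exists_mul_assoc_of_counit_right
    (hcounitR : ∀ a b : X, (∃ e ∈ ε, δ a b e) ↔ a = b)
    (hfrob₁ : ∀ a b y z : X, (∃ c, μ a b c ∧ δ c y z) ↔ (∃ u, δ b u z ∧ μ a u y))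
    (hfrob₂ : ∀ a b y z : X, (∃ c, μ a b c ∧ δ c y z) ↔ (∃ v, δ a y v ∧ μ v b z))
    {a b c d : X} (h : ∃ x, μ a b x ∧ μ x c d) : ∃ y, μ b c y ∧ μ a y d := by
  obtain ⟨x, habx, hxcd⟩ := h
  obtain ⟨e, he, hdde⟩ := (hcounitR d d).2 rfl
  obtain ⟨v, hxdv, hvce⟩ := (hfrob₂ x c d e).1 ⟨d, hxcd, hdde⟩
  obtain ⟨u, hbuv, haud⟩ := (hfrob₁ a b d v).1 ⟨x, habx, hxdv⟩
  obtain ⟨y, hbcy, hyue⟩ := (hfrob₂ b c u e).2 ⟨v, hbuv, hvce⟩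
  obtain rfl : y = u := (hcounitR y u).1 ⟨e, he, hyue⟩
  exact ⟨y, hbcy, haud⟩

theorem mul_assoc_of_counit
    (hcounitL : ∀ a b : X, (∃ e ∈ ε, δ a e b) ↔ a = b)
    (hcounitR : ∀ a b : X, (∃ e ∈ ε, δ a b e) ↔ a = b)
    (hfrob₁ : ∀ a b y z : X, (∃ c, μ a b c ∧ δ c y z) ↔ (∃ u, δ b u z ∧ μ a u y))
    (hfrob₂ : ∀ a b y z : X, (∃ c, μ a b c ∧ δ c y z) ↔ (∃ v, δ a y v ∧ μ v b z))
    (a b c d : X) : (∃ x, μ a b x ∧ μ x c d) ↔ (∃ y, μ b c y ∧ μ a y d) :=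
  ⟨exists_mul_assoc_of_counit_right hcounitR hfrob₁ hfrob₂,
    exists_mul_assoc_of_counit_right (μ := fun a b c => μ b a c) (δ := fun a b c => δ a c b)
      hcounitL (fun a b y z => hfrob₂ b a z y) (fun a b y z => hfrob₁ b a z y)⟩

theorem comul_coassoc_of_unit
    (hunitL : ∀ a b : X, (∃ r ∈ η, μ r a b) ↔ a = b)
    (hunitR : ∀ a b : X, (∃ r ∈ η, μ a r b) ↔ a = b)
    (hfrob₁ : ∀ a b y z : X, (∃ c, μ a b c ∧ δ c y z) ↔ (∃ u, δ b u z ∧ μ a u y))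
    (hfrob₂ : ∀ a b y z : X, (∃ c, μ a b c ∧ δ c y z) ↔ (∃ v, δ a y v ∧ μ v b z))
    (a x y z : X) : (∃ u, δ a u z ∧ δ u x y) ↔ (∃ v, δ a x v ∧ δ v y z) := by
  have swap {p q : X → Prop} : (∃ w, p w ∧ q w) ↔ ∃ w, q w ∧ p w := exists_congr fun _ => and_comm
  have hdual := mul_assoc_of_counit (μ := fun a b c => δ c a b) (δ := fun a b c => μ b c a)
    (fun a b => (hunitL b a).trans eq_comm) (fun a b => (hunitR b a).trans eq_comm)
    (fun a b y z => swap.trans ((hfrob₂ y z a b).trans swap))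
    (fun a b y z => swap.trans ((hfrob₁ y z a b).trans swap)) x y z a
  exact swap.trans (hdual.trans swap)

end RelFrobenius

/-- the unit law, the counit law and the Frobenius identity
together imply associativity of μ and coassociativity of δ. -/
theorem relFrobenius_assoc_of_frobId
    {X : Type*} (μ δ : X → X → X → Prop) (η ε : Set X)
    (hunitL : ∀ a b : X, (∃ r ∈ η, μ r a b) ↔ a = b)
    (hunitR : ∀ a b : X, (∃ r ∈ η, μ a r b) ↔ a = b)
    (hcounitL : ∀ a b : X, (∃ e ∈ ε, δ a e b) ↔ a = b)
    (hcounitR : ∀ a b : X, (∃ e ∈ ε, δ a b e) ↔ a = b)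
    (hfrob₁ : ∀ a b y z : X,
      (∃ c, μ a b c ∧ δ c y z) ↔ (∃ u, δ b u z ∧ μ a u y))
    (hfrob₂ : ∀ a b y z : X,
      (∃ c, μ a b c ∧ δ c y z) ↔ (∃ v, δ a y v ∧ μ v b z)) :
    (∀ a b c d : X,
      (∃ x, μ a b x ∧ μ x c d) ↔ (∃ y, μ b c y ∧ μ a y d)) ∧
    (∀ a x y z : X,
      (∃ u, δ a u z ∧ δ u x y) ↔ (∃ v, δ a x v ∧ δ v y z)) :=
  ⟨RelFrobenius.mul_assoc_of_counit hcounitL hcounitR hfrob₁ hfrob₂,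
    RelFrobenius.comul_coassoc_of_unit hunitL hunitR hfrob₁ hfrob₂⟩
end

section
/- Let (X;μ,η) be a monoid in Rel. Then μ has the cancellation property in the first coordinate (for all a₁,a₂,b,c ∈ X, μ:(a₁,b)↦c and μ:(a₂,b)↦c imply a₁ = a₂) if and only if the following Λ₀³-filling condition holds: for all a,b,c,d,e,f ∈ X, if μ:(b,a)↦e, μ:(c,e)↦d and μ:(f,a)↦d, then μ:(c,b)↦f. -/
/-!
Associativity rewrites the faces `μ:(b,a)↦e`, `μ:(c,e)↦d` of a Λ₀³-horn as `μ:(c,b)↦x`,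
`μ:(x,a)↦d` for some `x`, and left cancellation against `μ:(f,a)↦d` forces `x = f`.
Conversely, filling the horn whose edge `0 → 1` is a unit `r` for `b` turns two products
`μ:(a₁,b)↦c`, `μ:(a₂,b)↦c` into `μ:(a₁,r)↦a₂`, hence `a₁ = a₂`.
-/

namespace RelMonoid

variable {X : Type*}

def LeftCancel (μ : X → X → X → Prop) : Prop :=
  ∀ a₁ a₂ b c : X, μ a₁ b c → μ a₂ b c → a₁ = a₂

def HornFillingZeroThree (μ : X → X → X → Prop) : Prop :=
  ∀ a b c d e f : X, μ b a e → μ c e d → μ f a d → μ c b f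

variable {μ : X → X → X → Prop}

theorem hornFillingZeroThree_of_leftCancel
    (hassoc : ∀ a b c d : X, (∃ y, μ b c y ∧ μ a y d) → ∃ x, μ a b x ∧ μ x c d)
    (hcanc : LeftCancel μ) : HornFillingZeroThree μ := by
  intro a b c d e f hba hce hfa
  obtain ⟨x, hcbx, hxad⟩ := hassoc c b a d ⟨e, hba, hce⟩
  rwa [hcanc x f a d hxad hfa] at hcbx

theorem leftCancel_of_hornFillingZeroThree {η : Set X}
    (hunitL : ∀ a : X, ∃ r ∈ η, μ r a a)
    (hunitR : ∀ a b : X, (∃ r ∈ η, μ a r b) → a = b)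
    (hhorn : HornFillingZeroThree μ) : LeftCancel μ := by
  intro a₁ a₂ b c h₁ h₂
  obtain ⟨r, hr, hrb⟩ := hunitL b
  exact hunitR a₁ a₂ ⟨r, hr, hhorn b r a₁ c b a₂ hrb h₁ h₂⟩

end RelMonoid

/-- in a monoid in Rel, μ has the cancellation property in the
first coordinate iff the nerve admits fillings of Λ₀³-horns. -/
theorem relMonoid_left_cancellation_iff_horn_zero_three
    {X : Type*} (μ : X → X → X → Prop) (η : Set X)
    (hassoc : ∀ a b c d : X,
      (∃ x, μ a b x ∧ μ x c d) ↔ (∃ y, μ b c y ∧ μ a y d))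
    (hunitL : ∀ a b : X, (∃ r ∈ η, μ r a b) ↔ a = b)
    (hunitR : ∀ a b : X, (∃ r ∈ η, μ a r b) ↔ a = b) :
    (∀ a₁ a₂ b c : X, μ a₁ b c → μ a₂ b c → a₁ = a₂) ↔
    (∀ a b c d e f : X, μ b a e → μ c e d → μ f a d → μ c b f) :=
  ⟨RelMonoid.hornFillingZeroThree_of_leftCancel (fun a b c d => (hassoc a b c d).mpr),
    RelMonoid.leftCancel_of_hornFillingZeroThree (fun a => (hunitL a a).mpr rfl)
      (fun a b => (hunitR a b).mp)⟩
end

section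
/- Let (X;μ,η) be a monoid in Rel. Then μ has the cancellation property in the second coordinate (for all a,b₁,b₂,c ∈ X, μ:(a,b₁)↦c and μ:(a,b₂)↦c imply b₁ = b₂) if and only if the following Λ₃³-filling condition holds: for all a,b,c,d,e,f ∈ X, if μ:(c,b)↦f, μ:(c,e)↦d and μ:(f,a)↦d, then μ:(b,a)↦e. -/
theorem horn_three_three_fill_of_right_cancel {X : Type*} {μ : X → X → X → Prop}
    (hassoc : ∀ a b c d : X, (∃ x, μ a b x ∧ μ x c d) → ∃ y, μ b c y ∧ μ a y d)
    (hcancel : ∀ a b₁ b₂ c : X, μ a b₁ c → μ a b₂ c → b₁ = b₂)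
    {a b c d e f : X} (hcbf : μ c b f) (hced : μ c e d) (hfad : μ f a d) : μ b a e := by
  obtain ⟨y, hbay, hcyd⟩ := hassoc c b a d ⟨f, hcbf, hfad⟩
  rwa [hcancel c y e d hcyd hced] at hbay

theorem right_cancel_of_horn_three_three_fill {X : Type*} {μ : X → X → X → Prop} {η : Set X}
    (hunitR : ∀ a b : X, (∃ r ∈ η, μ a r b) ↔ a = b)
    (hfill : ∀ a b c d e f : X, μ c b f → μ c e d → μ f a d → μ b a e)
    {a b₁ b₂ c : X} (hab₁ : μ a b₁ c) (hab₂ : μ a b₂ c) : b₁ = b₂ := by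
  -- Fill the horn whose third face is the right-unit triangle μ:(c, r) ↦ c.
  obtain ⟨r, hr, hcrc⟩ := (hunitR c c).mpr rfl
  exact (hunitR b₁ b₂).mp ⟨r, hr, hfill r b₁ a c b₂ c hab₁ hab₂ hcrc⟩

theorem relMonoid_right_cancellation_iff_horn_three_three_general
    {X : Type*} (μ : X → X → X → Prop) (η : Set X)
    (hassoc : ∀ a b c d : X,
      (∃ x, μ a b x ∧ μ x c d) ↔ (∃ y, μ b c y ∧ μ a y d))
    (hunitR : ∀ a b : X, (∃ r ∈ η, μ a r b) ↔ a = b) :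
    (∀ a b₁ b₂ c : X, μ a b₁ c → μ a b₂ c → b₁ = b₂) ↔
    (∀ a b c d e f : X, μ c b f → μ c e d → μ f a d → μ b a e) :=
  ⟨fun hcancel _ _ _ _ _ _ =>
      horn_three_three_fill_of_right_cancel (fun a b c d => (hassoc a b c d).mp) hcancel,
    fun hfill _ _ _ _ => right_cancel_of_horn_three_three_fill hunitR hfill⟩

/-- in a monoid in Rel, μ has the cancellation property in the
second coordinate iff the nerve admits fillings of Λ₃³-horns. -/
theorem relMonoid_right_cancellation_iff_horn_three_three
    {X : Type*} (μ : X → X → X → Prop) (η : Set X)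
    (hassoc : ∀ a b c d : X,
      (∃ x, μ a b x ∧ μ x c d) ↔ (∃ y, μ b c y ∧ μ a y d))
    (hunitL : ∀ a b : X, (∃ r ∈ η, μ r a b) ↔ a = b)
    (hunitR : ∀ a b : X, (∃ r ∈ η, μ a r b) ↔ a = b) :
    (∀ a b₁ b₂ c : X, μ a b₁ c → μ a b₂ c → b₁ = b₂) ↔
    (∀ a b c d e f : X, μ c b f → μ c e d → μ f a d → μ b a e) :=
  relMonoid_right_cancellation_iff_horn_three_three_general μ η hassoc hunitR
end

section
/- Let (X;μ,η) be a monoid in Rel. Then μ is a partial operation (for all a,b,c₁,c₂ ∈ X, μ:(a,b)↦c₁ and μ:(a,b)↦c₂ imply c₁ = c₂) if and only if the following Λ₁³-filling condition holds: for all a,b,c,d,e,f ∈ X, if μ:(c,b)↦f, μ:(f,a)↦d and μ:(b,a)↦e, then μ:(c,e)↦d. -/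
/-!
If `μ` is partial, associativity turns the composite `c ∘ f ↦ d` with `f = c ∘ b` into
`c ∘ y ↦ d` with `μ:(b,a)↦y`, and partiality forces `y = e`. Conversely, given
`μ:(a,b)↦c₁` and `μ:(a,b)↦c₂`, fill the horn whose edge `c` is a unit `r` with
`μ:(r,a)↦a`: the filler `μ:(r,c₂)↦c₁` says `c₁ = c₂` by the unit law.
-/

section RelMonoid

variable {X : Type*} (μ : X → X → X → Prop)

theorem horn_one_three_of_partial
    (hassoc : ∀ a b c d : X, (∃ x, μ a b x ∧ μ x c d) → ∃ y, μ b c y ∧ μ a y d)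
    (hpart : ∀ a b c₁ c₂ : X, μ a b c₁ → μ a b c₂ → c₁ = c₂)
    (a b c d e f : X) (hcbf : μ c b f) (hfad : μ f a d) (hbae : μ b a e) : μ c e d := by
  obtain ⟨y, hbay, hcyd⟩ := hassoc c b a d ⟨f, hcbf, hfad⟩
  rwa [hpart b a y e hbay hbae] at hcyd

theorem partial_of_horn_one_three (η : Set X)
    (hunitL : ∀ a b : X, (∃ r ∈ η, μ r a b) ↔ a = b)
    (hhorn : ∀ a b c d e f : X, μ c b f → μ f a d → μ b a e → μ c e d)
    (a b c₁ c₂ : X) (h₁ : μ a b c₁) (h₂ : μ a b c₂) : c₁ = c₂ := by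
  obtain ⟨r, hr, hraa⟩ := (hunitL a a).mpr rfl
  have hrc : μ r c₂ c₁ := hhorn b a r c₁ c₂ a hraa h₁ h₂
  exact ((hunitL c₂ c₁).mp ⟨r, hr, hrc⟩).symm

end RelMonoid

theorem relMonoid_partial_iff_horn_one_three_general
    {X : Type*} (μ : X → X → X → Prop) (η : Set X)
    (hassoc : ∀ a b c d : X,
      (∃ x, μ a b x ∧ μ x c d) ↔ (∃ y, μ b c y ∧ μ a y d))
    (hunitL : ∀ a b : X, (∃ r ∈ η, μ r a b) ↔ a = b) :
    (∀ a b c₁ c₂ : X, μ a b c₁ → μ a b c₂ → c₁ = c₂) ↔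
    (∀ a b c d e f : X, μ c b f → μ f a d → μ b a e → μ c e d) :=
  ⟨horn_one_three_of_partial μ fun a b c d => (hassoc a b c d).mp,
    partial_of_horn_one_three μ η hunitL⟩

/-- in a monoid in Rel, μ is a partial operation iff the nerve
admits fillings of Λ₁³-horns. -/
theorem relMonoid_partial_iff_horn_one_three
    {X : Type*} (μ : X → X → X → Prop) (η : Set X)
    (hassoc : ∀ a b c d : X,
      (∃ x, μ a b x ∧ μ x c d) ↔ (∃ y, μ b c y ∧ μ a y d))
    (hunitL : ∀ a b : X, (∃ r ∈ η, μ r a b) ↔ a = b)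
    (hunitR : ∀ a b : X, (∃ r ∈ η, μ a r b) ↔ a = b) :
    (∀ a b c₁ c₂ : X, μ a b c₁ → μ a b c₂ → c₁ = c₂) ↔
    (∀ a b c d e f : X, μ c b f → μ f a d → μ b a e → μ c e d) :=
  relMonoid_partial_iff_horn_one_three_general μ η hassoc hunitL
end

section
/- Let (X;μ,η) be a monoid in Rel. Then μ is a partial operation (for all a,b,c₁,c₂ ∈ X, μ:(a,b)↦c₁ and μ:(a,b)↦c₂ imply c₁ = c₂) if and only if the following Λ₂³-filling condition holds: for all a,b,c,d,e,f ∈ X, if μ:(c,b)↦f, μ:(c,e)↦d and μ:(b,a)↦e, then μ:(f,a)↦d. -/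
/-!
Partiality gives the filler: reassociating the horn's composite `c ∘ e = c ∘ (b ∘ a)` yields some
`x` with `μ c b x` and `μ x a d`, and partiality forces `x = f`. Conversely, filling the horn whose
first edge is a right unit `r` of `b` turns two values `c₁, c₂` of `μ a b` into `μ c₁ r c₂`,
whence `c₁ = c₂` by the unit law.
-/

namespace RelMonoid

variable {X : Type*} (μ : X → X → X → Prop)

def IsPartial : Prop :=
  ∀ a b c₁ c₂ : X, μ a b c₁ → μ a b c₂ → c₁ = c₂

def FillsHornTwoThree : Prop :=
  ∀ a b c d e f : X, μ c b f → μ c e d → μ b a e → μ f a d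

variable {μ}

theorem fillsHornTwoThree_of_isPartial
    (hassoc : ∀ a b c d : X, (∃ y, μ b c y ∧ μ a y d) → ∃ x, μ a b x ∧ μ x c d)
    (hpartial : IsPartial μ) : FillsHornTwoThree μ := by
  intro a b c d e f hcbf hced hbae
  obtain ⟨x, hcbx, hxad⟩ := hassoc c b a d ⟨e, hbae, hced⟩
  rwa [hpartial c b f x hcbf hcbx]

theorem isPartial_of_fillsHornTwoThree {η : Set X}
    (hunitR : ∀ a b : X, (∃ r ∈ η, μ a r b) ↔ a = b)
    (hfill : FillsHornTwoThree μ) : IsPartial μ := by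
  intro a b c₁ c₂ h₁ h₂
  obtain ⟨r, hr, hbrb⟩ := (hunitR b b).mpr rfl
  exact (hunitR c₁ c₂).mp ⟨r, hr, hfill r b a c₂ b c₁ h₁ h₂ hbrb⟩

end RelMonoid

theorem relMonoid_partial_iff_horn_two_three_general
    {X : Type*} (μ : X → X → X → Prop) (η : Set X)
    (hassoc : ∀ a b c d : X,
      (∃ x, μ a b x ∧ μ x c d) ↔ (∃ y, μ b c y ∧ μ a y d))
    (hunitR : ∀ a b : X, (∃ r ∈ η, μ a r b) ↔ a = b) :
    (∀ a b c₁ c₂ : X, μ a b c₁ → μ a b c₂ → c₁ = c₂) ↔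
    (∀ a b c d e f : X, μ c b f → μ c e d → μ b a e → μ f a d) :=
  ⟨RelMonoid.fillsHornTwoThree_of_isPartial fun a b c d => (hassoc a b c d).mpr,
    RelMonoid.isPartial_of_fillsHornTwoThree hunitR⟩

/-- in a monoid in Rel, μ is a partial operation iff the nerve
admits fillings of Λ₂³-horns. -/
theorem relMonoid_partial_iff_horn_two_three
    {X : Type*} (μ : X → X → X → Prop) (η : Set X)
    (hassoc : ∀ a b c d : X,
      (∃ x, μ a b x ∧ μ x c d) ↔ (∃ y, μ b c y ∧ μ a y d))
    (hunitL : ∀ a b : X, (∃ r ∈ η, μ r a b) ↔ a = b)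
    (hunitR : ∀ a b : X, (∃ r ∈ η, μ a r b) ↔ a = b) :
    (∀ a b c₁ c₂ : X, μ a b c₁ → μ a b c₂ → c₁ = c₂) ↔
    (∀ a b c d e f : X, μ c b f → μ c e d → μ b a e → μ f a d) :=
  relMonoid_partial_iff_horn_two_three_general μ η hassoc hunitR
end

section
/- Let (X;μ,η,δ,ε) be a Frobenius algebra in Rel. Then for all a,e,r ∈ X with e ∈ ε, r ∈ η, μ:(r,a)↦a and μ:(r,e)↦e (i.e., a and e have the same target), there exists a unique x ∈ X with μ:(a,x)↦e. (This is the unique filling of ε-horns ε-Λ₂² in the nerve of the Frobenius algebra.) -/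
/-!
Read μ:(a,b)↦c as `c = a b`, δ:c↦(y,z) as `c = y z`, and the elements of η and ε as identities,
as in the groupoid of a special Frobenius algebra. The Frobenius law turns `r e = e` and
`r a = a` into `a = e a`, and then moves a right unit `a r' = a` across to a solution of `a x = e`.
Any solution `x` is also a left inverse, `r = x a` for a unit `r`; Frobenius then turns a second
solution `a y = e` into `y = x e`, so `y = x` by the counit law.
-/

namespace RelFrobenius

variable {X : Type*}

section Laws

variable (μ δ : X → X → X → Prop) (η ε : Set X)

def IsLeftUnit : Prop := ∀ a b : X, (∃ r ∈ η, μ r a b) ↔ a = b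

def IsRightUnit : Prop := ∀ a b : X, (∃ r ∈ η, μ a r b) ↔ a = b

def IsLeftCounit : Prop := ∀ a b : X, (∃ e ∈ ε, δ a e b) ↔ a = b

def IsRightCounit : Prop := ∀ a b : X, (∃ e ∈ ε, δ a b e) ↔ a = b

/-- `δ ∘ μ = (μ ⊗ 1) ∘ (1 ⊗ δ)` -/
def FrobeniusLeft : Prop :=
  ∀ a b y z : X, (∃ c, μ a b c ∧ δ c y z) ↔ (∃ u, δ b u z ∧ μ a u y)

/-- `δ ∘ μ = (1 ⊗ μ) ∘ (δ ⊗ 1)` -/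
def FrobeniusRight : Prop :=
  ∀ a b y z : X, (∃ c, μ a b c ∧ δ c y z) ↔ (∃ v, δ a y v ∧ μ v b z)

end Laws

variable {μ δ : X → X → X → Prop} {η ε : Set X}

theorem comul_of_unit_comul_mul (hfrob : FrobeniusRight μ δ) (hunit : IsLeftUnit μ η)
    {r y v b z : X} (hr : r ∈ η) (hδ : δ r y v) (hμ : μ v b z) : δ b y z := by
  obtain ⟨c, hrb, hc⟩ := (hfrob r b y z).mpr ⟨v, hδ, hμ⟩
  rwa [← (hunit b c).mp ⟨r, hr, hrb⟩] at hc

theorem comul_of_unit_comul_mul' (hfrob : FrobeniusLeft μ δ) (hunit : IsRightUnit μ η)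
    {r u z a y : X} (hr : r ∈ η) (hδ : δ r u z) (hμ : μ a u y) : δ a y z := by
  obtain ⟨c, har, hc⟩ := (hfrob a r y z).mpr ⟨u, hδ, hμ⟩
  rwa [← (hunit a c).mp ⟨r, hr, har⟩] at hc

theorem comul_counit_of_mul_counit (hfrob : FrobeniusRight μ δ) (hcounitL : IsLeftCounit δ ε)
    (hcounitR : IsRightCounit δ ε) {a e : X} (he : e ∈ ε) (hae : μ a e e) : δ a e a := by
  obtain ⟨e₁, he₁, hδe⟩ := (hcounitR e e).mpr rfl
  obtain ⟨w, haw, -⟩ := (hfrob a e e e₁).mp ⟨e, hae, hδe⟩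
  rwa [← (hcounitL a w).mp ⟨e, he, haw⟩] at haw

theorem exists_mul_eq_of_comul (hfrob : FrobeniusLeft μ δ) (hunit : IsRightUnit μ η)
    {a e : X} (hδ : δ a e a) : ∃ x, μ a x e := by
  obtain ⟨r, hr, har⟩ := (hunit a a).mpr rfl
  obtain ⟨x, -, hx⟩ := (hfrob a r e a).mp ⟨a, har, hδ⟩
  exact ⟨x, hx⟩

theorem comul_self_of_mul_counit (hfrob : FrobeniusLeft μ δ) (hcounitL : IsLeftCounit δ ε)
    (hcounitR : IsRightCounit δ ε) {a x e : X} (he : e ∈ ε) (hx : μ a x e) : δ x x e := by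
  obtain ⟨e₀, he₀, hδe⟩ := (hcounitL e e).mpr rfl
  obtain ⟨u, hxu, -⟩ := (hfrob a x e₀ e).mp ⟨e, hx, hδe⟩
  rwa [← (hcounitR x u).mp ⟨e, he, hxu⟩] at hxu

theorem exists_unit_comul_of_mul_counit (hfrobL : FrobeniusLeft μ δ) (hfrobR : FrobeniusRight μ δ)
    (hunitL : IsLeftUnit μ η) (hunitR : IsRightUnit μ η) (hcounitL : IsLeftCounit δ ε)
    (hcounitR : IsRightCounit δ ε) {a x e : X} (he : e ∈ ε) (hx : μ a x e) :
    ∃ r ∈ η, δ r x a := by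
  obtain ⟨r, hr, hrx⟩ := (hunitL x x).mpr rfl
  obtain ⟨v, hrv, hvx⟩ := (hfrobR r x x e).mp
    ⟨x, hrx, comul_self_of_mul_counit hfrobL hcounitL hcounitR he hx⟩
  have hav : a = v := (hcounitL a v).mp ⟨e, he, comul_of_unit_comul_mul' hfrobL hunitR hr hrv hx⟩
  exact ⟨r, hr, hav ▸ hrv⟩

theorem mul_counit_right_unique (hfrobL : FrobeniusLeft μ δ) (hfrobR : FrobeniusRight μ δ)
    (hunitL : IsLeftUnit μ η) (hunitR : IsRightUnit μ η) (hcounitL : IsLeftCounit δ ε)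
    (hcounitR : IsRightCounit δ ε) {a x y e : X} (he : e ∈ ε) (hx : μ a x e) (hy : μ a y e) :
    y = x := by
  obtain ⟨r, hr, hrx⟩ :=
    exists_unit_comul_of_mul_counit hfrobL hfrobR hunitL hunitR hcounitL hcounitR he hx
  exact (hcounitR y x).mp ⟨e, he, comul_of_unit_comul_mul hfrobR hunitL hr hrx hy⟩

end RelFrobenius

open RelFrobenius in
theorem relFrobenius_eps_horn_two_top_general
    {X : Type*} (μ δ : X → X → X → Prop) (η ε : Set X)
    (hunitL : ∀ a b : X, (∃ r ∈ η, μ r a b) ↔ a = b)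
    (hunitR : ∀ a b : X, (∃ r ∈ η, μ a r b) ↔ a = b)
    (hcounitL : ∀ a b : X, (∃ e ∈ ε, δ a e b) ↔ a = b)
    (hcounitR : ∀ a b : X, (∃ e ∈ ε, δ a b e) ↔ a = b)
    (hfrob₁ : ∀ a b y z : X,
      (∃ c, μ a b c ∧ δ c y z) ↔ (∃ u, δ b u z ∧ μ a u y))
    (hfrob₂ : ∀ a b y z : X,
      (∃ c, μ a b c ∧ δ c y z) ↔ (∃ v, δ a y v ∧ μ v b z)) :
    ∀ a e r : X, e ∈ ε → r ∈ η → μ r a a → μ r e e →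
      ∃! x : X, μ a x e := by
  intro a e r he hr hra hre
  have hδr : δ r e r := comul_counit_of_mul_counit hfrob₂ hcounitL hcounitR he hre
  have hδa : δ a e a := comul_of_unit_comul_mul hfrob₂ hunitL hr hδr hra
  obtain ⟨x, hx⟩ := exists_mul_eq_of_comul hfrob₁ hunitR hδa
  exact ⟨x, hx, fun y hy =>
    mul_counit_right_unique hfrob₁ hfrob₂ hunitL hunitR hcounitL hcounitR he hx hy⟩

/-- unique filling of ε-horns ε-Λ₂² in the nerve of a Frobenius
algebra: if e ∈ ε, r ∈ η, and a and e have the same target r, then there is a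
unique x with μ:(a,x)↦e. -/
theorem relFrobenius_eps_horn_two_top
    {X : Type*} (μ δ : X → X → X → Prop) (η ε : Set X)
    (hassoc : ∀ a b c d : X,
      (∃ x, μ a b x ∧ μ x c d) ↔ (∃ y, μ b c y ∧ μ a y d))
    (hunitL : ∀ a b : X, (∃ r ∈ η, μ r a b) ↔ a = b)
    (hunitR : ∀ a b : X, (∃ r ∈ η, μ a r b) ↔ a = b)
    (hcoassoc : ∀ a x y z : X,
      (∃ u, δ a u z ∧ δ u x y) ↔ (∃ v, δ a x v ∧ δ v y z))
    (hcounitL : ∀ a b : X, (∃ e ∈ ε, δ a e b) ↔ a = b)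
    (hcounitR : ∀ a b : X, (∃ e ∈ ε, δ a b e) ↔ a = b)
    (hfrob₁ : ∀ a b y z : X,
      (∃ c, μ a b c ∧ δ c y z) ↔ (∃ u, δ b u z ∧ μ a u y))
    (hfrob₂ : ∀ a b y z : X,
      (∃ c, μ a b c ∧ δ c y z) ↔ (∃ v, δ a y v ∧ μ v b z)) :
    ∀ a e r : X, e ∈ ε → r ∈ η → μ r a a → μ r e e →
      ∃! x : X, μ a x e :=
  relFrobenius_eps_horn_two_top_general μ δ η ε hunitL hunitR hcounitL hcounitR hfrob₁ hfrob₂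
end

section
/- Let (X;μ,η,δ,ε) be a Frobenius algebra in Rel. Then for all a,b,c,x,y,e ∈ X, if e ∈ ε, μ:(c,x)↦e, μ:(y,a)↦e and μ:(b,a)↦x, then μ:(c,b)↦y. (This is the filling of ε-horns ε-Λ₀³ in the nerve of the Frobenius algebra: the 3-simplex has edges a:0→1, b:1→2, c:2→3, x:0→2, y:1→3 and marked edge e:0→3, and the conclusion is the missing face opposite to vertex 0.) -/
/-!
For each `a`, the relation `μ : (z, a) ↦ e` with `e ∈ ε` has at most one solution `z`: choosing
a unit `r` and some `p` with `δ : r ↦ (a, p)`, the Frobenius identity turns `μ : (z, a) ↦ e` into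
`μ : (z, r) ↦ d` and `δ : d ↦ (e, p)`, so `z = d = p` by the unit and counit laws. Associativity
fills the horn with some `t` satisfying `μ : (c, b) ↦ t` and `μ : (t, a) ↦ e`, and uniqueness
forces `t = y`.
-/

namespace RelFrobenius

variable {X : Type*} {μ δ : X → X → X → Prop} {η ε : Set X}

theorem exists_unit_comul
    (hunitL : ∀ a b : X, (∃ r ∈ η, μ r a b) ↔ a = b)
    (hcounitR : ∀ a b : X, (∃ e ∈ ε, δ a b e) ↔ a = b)
    (hfrob₂ : ∀ a b y z : X, (∃ c, μ a b c ∧ δ c y z) ↔ (∃ v, δ a y v ∧ μ v b z))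
    (a : X) : ∃ r ∈ η, ∃ p, δ r a p := by
  obtain ⟨r, hr, hraa⟩ := (hunitL a a).mpr rfl
  obtain ⟨s, -, hdaas⟩ := (hcounitR a a).mpr rfl
  obtain ⟨p, hdrap, -⟩ := (hfrob₂ r a a s).mp ⟨a, hraa, hdaas⟩
  exact ⟨r, hr, p, hdrap⟩

theorem eq_of_mul_mem_counit
    (hunitR : ∀ a b : X, (∃ r ∈ η, μ a r b) ↔ a = b)
    (hcounitL : ∀ a b : X, (∃ e ∈ ε, δ a e b) ↔ a = b)
    (hfrob₁ : ∀ a b y z : X, (∃ c, μ a b c ∧ δ c y z) ↔ (∃ u, δ b u z ∧ μ a u y))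
    {r a p z e : X} (hr : r ∈ η) (hrap : δ r a p) (he : e ∈ ε) (hzae : μ z a e) : z = p := by
  obtain ⟨d, hzrd, hdep⟩ := (hfrob₁ z r e p).mpr ⟨a, hrap, hzae⟩
  exact ((hunitR z d).mp ⟨r, hr, hzrd⟩).trans ((hcounitL d p).mp ⟨e, he, hdep⟩)

theorem left_eq_of_mul_mem_counit
    (hunitL : ∀ a b : X, (∃ r ∈ η, μ r a b) ↔ a = b)
    (hunitR : ∀ a b : X, (∃ r ∈ η, μ a r b) ↔ a = b)
    (hcounitL : ∀ a b : X, (∃ e ∈ ε, δ a e b) ↔ a = b)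
    (hcounitR : ∀ a b : X, (∃ e ∈ ε, δ a b e) ↔ a = b)
    (hfrob₁ : ∀ a b y z : X, (∃ c, μ a b c ∧ δ c y z) ↔ (∃ u, δ b u z ∧ μ a u y))
    (hfrob₂ : ∀ a b y z : X, (∃ c, μ a b c ∧ δ c y z) ↔ (∃ v, δ a y v ∧ μ v b z))
    {a z z' e e' : X} (he : e ∈ ε) (he' : e' ∈ ε) (hz : μ z a e) (hz' : μ z' a e') :
    z = z' := by
  obtain ⟨r, hr, p, hrap⟩ := exists_unit_comul hunitL hcounitR hfrob₂ a
  exact (eq_of_mul_mem_counit hunitR hcounitL hfrob₁ hr hrap he hz).trans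
    (eq_of_mul_mem_counit hunitR hcounitL hfrob₁ hr hrap he' hz').symm

end RelFrobenius

theorem relFrobenius_eps_horn_three_zero_general
    {X : Type*} (μ δ : X → X → X → Prop) (η ε : Set X)
    (hassoc : ∀ a b c d : X,
      (∃ x, μ a b x ∧ μ x c d) ↔ (∃ y, μ b c y ∧ μ a y d))
    (hunitL : ∀ a b : X, (∃ r ∈ η, μ r a b) ↔ a = b)
    (hunitR : ∀ a b : X, (∃ r ∈ η, μ a r b) ↔ a = b)
    (hcounitL : ∀ a b : X, (∃ e ∈ ε, δ a e b) ↔ a = b)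
    (hcounitR : ∀ a b : X, (∃ e ∈ ε, δ a b e) ↔ a = b)
    (hfrob₁ : ∀ a b y z : X,
      (∃ c, μ a b c ∧ δ c y z) ↔ (∃ u, δ b u z ∧ μ a u y))
    (hfrob₂ : ∀ a b y z : X,
      (∃ c, μ a b c ∧ δ c y z) ↔ (∃ v, δ a y v ∧ μ v b z)) :
    ∀ a b c x y e : X, e ∈ ε → μ c x e → μ y a e → μ b a x → μ c b y := by
  intro a b c x y e he hcxe hyae hbax
  obtain ⟨t, hcbt, htae⟩ := (hassoc c b a e).mpr ⟨x, hbax, hcxe⟩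
  have hty : t = y := RelFrobenius.left_eq_of_mul_mem_counit hunitL hunitR hcounitL hcounitR
    hfrob₁ hfrob₂ he he htae hyae
  exact hty ▸ hcbt

/-- filling of ε-horns ε-Λ₀³ in the nerve of a Frobenius algebra:
if e ∈ ε, μ:(c,x)↦e, μ:(y,a)↦e and μ:(b,a)↦x, then μ:(c,b)↦y. -/
theorem relFrobenius_eps_horn_three_zero
    {X : Type*} (μ δ : X → X → X → Prop) (η ε : Set X)
    (hassoc : ∀ a b c d : X,
      (∃ x, μ a b x ∧ μ x c d) ↔ (∃ y, μ b c y ∧ μ a y d))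
    (hunitL : ∀ a b : X, (∃ r ∈ η, μ r a b) ↔ a = b)
    (hunitR : ∀ a b : X, (∃ r ∈ η, μ a r b) ↔ a = b)
    (hcoassoc : ∀ a x y z : X,
      (∃ u, δ a u z ∧ δ u x y) ↔ (∃ v, δ a x v ∧ δ v y z))
    (hcounitL : ∀ a b : X, (∃ e ∈ ε, δ a e b) ↔ a = b)
    (hcounitR : ∀ a b : X, (∃ e ∈ ε, δ a b e) ↔ a = b)
    (hfrob₁ : ∀ a b y z : X,
      (∃ c, μ a b c ∧ δ c y z) ↔ (∃ u, δ b u z ∧ μ a u y))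
    (hfrob₂ : ∀ a b y z : X,
      (∃ c, μ a b c ∧ δ c y z) ↔ (∃ v, δ a y v ∧ μ v b z)) :
    ∀ a b c x y e : X, e ∈ ε → μ c x e → μ y a e → μ b a x → μ c b y :=
  relFrobenius_eps_horn_three_zero_general μ δ η ε hassoc hunitL hunitR hcounitL hcounitR hfrob₁
    hfrob₂
end

section
/- Let (X;μ,η,δ,ε) be a Frobenius algebra in Rel. Then for all a,b,c,x,y,e ∈ X, if e ∈ ε, μ:(c,b)↦y, μ:(c,x)↦e and μ:(y,a)↦e, then μ:(b,a)↦x. (This is the filling of ε-horns ε-Λ₃³ in the nerve of the Frobenius algebra: the 3-simplex has edges a:0→1, b:1→2, c:2→3, x:0→2, y:1→3 and marked edge e:0→3, and the conclusion is the missing face opposite to vertex 3.) -/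
/-!
The Frobenius identity together with the (co)unit laws gives the two snake identities: a cap
followed by a cup, or a cup followed by a cap, is the identity relation. Hence `Cap c x` forces
`Cup x c`, and then `Cap c n` forces `n = x`. In the horn, associativity turns `μ (c, b) y` and
`μ (y, a) e` into some `n` with `μ (b, a) n` and `μ (c, n) e`; comparing the caps `(c, x)` and
`(c, n)` gives `n = x`.
-/

namespace RelFrobenius

variable {X : Type*} (μ δ : X → X → X → Prop) (η ε : Set X)

def Cap (p q : X) : Prop := ∃ e ∈ ε, μ p q e

def Cup (p q : X) : Prop := ∃ r ∈ η, δ r p q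

variable {μ δ η ε}

theorem eq_of_cap_of_cup
    (hunitR : ∀ a b : X, (∃ r ∈ η, μ a r b) ↔ a = b)
    (hcounitL : ∀ a b : X, (∃ e ∈ ε, δ a e b) ↔ a = b)
    (hfrob₁ : ∀ a b y z : X, (∃ c, μ a b c ∧ δ c y z) ↔ (∃ u, δ b u z ∧ μ a u y))
    {p q r : X} (hcap : Cap μ ε p q) (hcup : Cup δ η q r) : p = r := by
  obtain ⟨e, he, hpq⟩ := hcap
  obtain ⟨r₀, hr₀, hqr⟩ := hcup
  obtain ⟨d, hpd, hdr⟩ := (hfrob₁ p r₀ e r).mpr ⟨q, hqr, hpq⟩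
  obtain rfl : p = d := (hunitR p d).mp ⟨r₀, hr₀, hpd⟩
  exact (hcounitL p r).mp ⟨e, he, hdr⟩

theorem eq_of_cup_of_cap
    (hunitL : ∀ a b : X, (∃ r ∈ η, μ r a b) ↔ a = b)
    (hcounitR : ∀ a b : X, (∃ e ∈ ε, δ a b e) ↔ a = b)
    (hfrob₂ : ∀ a b y z : X, (∃ c, μ a b c ∧ δ c y z) ↔ (∃ v, δ a y v ∧ μ v b z))
    {p q r : X} (hcup : Cup δ η p q) (hcap : Cap μ ε q r) : r = p := by
  obtain ⟨r₀, hr₀, hpq⟩ := hcup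
  obtain ⟨e, he, hqr⟩ := hcap
  obtain ⟨d, hrd, hdp⟩ := (hfrob₂ r₀ r p e).mpr ⟨q, hpq, hqr⟩
  obtain rfl : r = d := (hunitL r d).mp ⟨r₀, hr₀, hrd⟩
  exact (hcounitR r p).mp ⟨e, he, hdp⟩

theorem exists_cup_cap
    (hunitL : ∀ a b : X, (∃ r ∈ η, μ r a b) ↔ a = b)
    (hcounitR : ∀ a b : X, (∃ e ∈ ε, δ a b e) ↔ a = b)
    (hfrob₂ : ∀ a b y z : X, (∃ c, μ a b c ∧ δ c y z) ↔ (∃ v, δ a y v ∧ μ v b z))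
    (x : X) : ∃ q, Cup δ η x q ∧ Cap μ ε q x := by
  obtain ⟨r₀, hr₀, hx⟩ := (hunitL x x).mpr rfl
  obtain ⟨e, he, hx'⟩ := (hcounitR x x).mpr rfl
  obtain ⟨q, hxq, hqx⟩ := (hfrob₂ r₀ x x e).mp ⟨x, hx, hx'⟩
  exact ⟨q, ⟨r₀, hr₀, hxq⟩, ⟨e, he, hqx⟩⟩

theorem cup_of_cap
    (hunitL : ∀ a b : X, (∃ r ∈ η, μ r a b) ↔ a = b)
    (hunitR : ∀ a b : X, (∃ r ∈ η, μ a r b) ↔ a = b)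
    (hcounitL : ∀ a b : X, (∃ e ∈ ε, δ a e b) ↔ a = b)
    (hcounitR : ∀ a b : X, (∃ e ∈ ε, δ a b e) ↔ a = b)
    (hfrob₁ : ∀ a b y z : X, (∃ c, μ a b c ∧ δ c y z) ↔ (∃ u, δ b u z ∧ μ a u y))
    (hfrob₂ : ∀ a b y z : X, (∃ c, μ a b c ∧ δ c y z) ↔ (∃ v, δ a y v ∧ μ v b z))
    {c x : X} (hcap : Cap μ ε c x) : Cup δ η x c := by
  obtain ⟨q, hxq, -⟩ := exists_cup_cap hunitL hcounitR hfrob₂ x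
  obtain rfl : c = q := eq_of_cap_of_cup hunitR hcounitL hfrob₁ hcap hxq
  exact hxq

theorem cap_right_unique
    (hunitL : ∀ a b : X, (∃ r ∈ η, μ r a b) ↔ a = b)
    (hunitR : ∀ a b : X, (∃ r ∈ η, μ a r b) ↔ a = b)
    (hcounitL : ∀ a b : X, (∃ e ∈ ε, δ a e b) ↔ a = b)
    (hcounitR : ∀ a b : X, (∃ e ∈ ε, δ a b e) ↔ a = b)
    (hfrob₁ : ∀ a b y z : X, (∃ c, μ a b c ∧ δ c y z) ↔ (∃ u, δ b u z ∧ μ a u y))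
    (hfrob₂ : ∀ a b y z : X, (∃ c, μ a b c ∧ δ c y z) ↔ (∃ v, δ a y v ∧ μ v b z))
    {c x n : X} (hx : Cap μ ε c x) (hn : Cap μ ε c n) : n = x :=
  eq_of_cup_of_cap hunitL hcounitR hfrob₂
    (cup_of_cap hunitL hunitR hcounitL hcounitR hfrob₁ hfrob₂ hx) hn

end RelFrobenius

theorem relFrobenius_eps_horn_three_top_general
    {X : Type*} (μ δ : X → X → X → Prop) (η ε : Set X)
    (hassoc : ∀ a b c d : X,
      (∃ x, μ a b x ∧ μ x c d) ↔ (∃ y, μ b c y ∧ μ a y d))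
    (hunitL : ∀ a b : X, (∃ r ∈ η, μ r a b) ↔ a = b)
    (hunitR : ∀ a b : X, (∃ r ∈ η, μ a r b) ↔ a = b)
    (hcounitL : ∀ a b : X, (∃ e ∈ ε, δ a e b) ↔ a = b)
    (hcounitR : ∀ a b : X, (∃ e ∈ ε, δ a b e) ↔ a = b)
    (hfrob₁ : ∀ a b y z : X,
      (∃ c, μ a b c ∧ δ c y z) ↔ (∃ u, δ b u z ∧ μ a u y))
    (hfrob₂ : ∀ a b y z : X,
      (∃ c, μ a b c ∧ δ c y z) ↔ (∃ v, δ a y v ∧ μ v b z)) :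
    ∀ a b c x y e : X, e ∈ ε → μ c b y → μ c x e → μ y a e → μ b a x := by
  intro a b c x y e he hcb hcx hya
  obtain ⟨n, hban, hcn⟩ := (hassoc c b a e).mp ⟨y, hcb, hya⟩
  obtain rfl : n = x :=
    RelFrobenius.cap_right_unique hunitL hunitR hcounitL hcounitR hfrob₁ hfrob₂
      ⟨e, he, hcx⟩ ⟨e, he, hcn⟩
  exact hban

/-- filling of ε-horns ε-Λ₃³ in the nerve of a Frobenius algebra:
if e ∈ ε, μ:(c,b)↦y, μ:(c,x)↦e and μ:(y,a)↦e, then μ:(b,a)↦x. -/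
theorem relFrobenius_eps_horn_three_top
    {X : Type*} (μ δ : X → X → X → Prop) (η ε : Set X)
    (hassoc : ∀ a b c d : X,
      (∃ x, μ a b x ∧ μ x c d) ↔ (∃ y, μ b c y ∧ μ a y d))
    (hunitL : ∀ a b : X, (∃ r ∈ η, μ r a b) ↔ a = b)
    (hunitR : ∀ a b : X, (∃ r ∈ η, μ a r b) ↔ a = b)
    (hcoassoc : ∀ a x y z : X,
      (∃ u, δ a u z ∧ δ u x y) ↔ (∃ v, δ a x v ∧ δ v y z))
    (hcounitL : ∀ a b : X, (∃ e ∈ ε, δ a e b) ↔ a = b)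
    (hcounitR : ∀ a b : X, (∃ e ∈ ε, δ a b e) ↔ a = b)
    (hfrob₁ : ∀ a b y z : X,
      (∃ c, μ a b c ∧ δ c y z) ↔ (∃ u, δ b u z ∧ μ a u y))
    (hfrob₂ : ∀ a b y z : X,
      (∃ c, μ a b c ∧ δ c y z) ↔ (∃ v, δ a y v ∧ μ v b z)) :
    ∀ a b c x y e : X, e ∈ ε → μ c b y → μ c x e → μ y a e → μ b a x :=
  relFrobenius_eps_horn_three_top_general μ δ η ε hassoc hunitL hunitR hcounitL hcounitR hfrob₁
    hfrob₂
end

section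
/- Let (X;μ,η) be a monoid in Rel and suppose μ:(u,v)↦w for some u,v,w ∈ X. Then w has the same source as v and the same target as u; that is: for every r ∈ η, if μ:(v,r)↦v then μ:(w,r)↦w, and for every r ∈ η, if μ:(r,u)↦u then μ:(r,w)↦w. -/
namespace RelMonoid

variable {X : Type*} {μ : X → X → X → Prop} {η : Set X}

/-- Reassociating `w ∈ u·(v·r)` gives some `x ∈ u·v` with `w ∈ x·r`; the unit law forces `x = w`. -/
theorem mul_right_unit_of_mem_mul
    (hassoc : ∀ a b c d : X, (∃ y, μ b c y ∧ μ a y d) → ∃ x, μ a b x ∧ μ x c d)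
    (hunitR : ∀ a b : X, (∃ r ∈ η, μ a r b) → a = b)
    {u v w r : X} (hr : r ∈ η) (huvw : μ u v w) (hvr : μ v r v) : μ w r w := by
  obtain ⟨x, -, hxrw⟩ := hassoc u v r w ⟨v, hvr, huvw⟩
  obtain rfl : x = w := hunitR x w ⟨r, hr, hxrw⟩
  exact hxrw

theorem mul_left_unit_of_mem_mul
    (hassoc : ∀ a b c d : X, (∃ x, μ a b x ∧ μ x c d) → ∃ y, μ b c y ∧ μ a y d)
    (hunitL : ∀ a b : X, (∃ r ∈ η, μ r a b) → a = b)
    {u v w r : X} (hr : r ∈ η) (huvw : μ u v w) (hru : μ r u u) : μ r w w := by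
  obtain ⟨y, -, hryw⟩ := hassoc r u v w ⟨u, hru, huvw⟩
  obtain rfl : y = w := hunitL y w ⟨r, hr, hryw⟩
  exact hryw

end RelMonoid

/-- in a monoid in Rel, if μ:(u,v)↦w, then w has the same source
as v and the same target as u. -/
theorem relMonoid_product_source_target
    {X : Type*} (μ : X → X → X → Prop) (η : Set X)
    (hassoc : ∀ a b c d : X,
      (∃ x, μ a b x ∧ μ x c d) ↔ (∃ y, μ b c y ∧ μ a y d))
    (hunitL : ∀ a b : X, (∃ r ∈ η, μ r a b) ↔ a = b)
    (hunitR : ∀ a b : X, (∃ r ∈ η, μ a r b) ↔ a = b) :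
    ∀ u v w : X, μ u v w →
      (∀ r ∈ η, μ v r v → μ w r w) ∧ (∀ r ∈ η, μ r u u → μ r w w) :=
  fun _ _ _ huvw =>
    ⟨fun _ hr hvr => RelMonoid.mul_right_unit_of_mem_mul (fun a b c d => (hassoc a b c d).2)
        (fun a b => (hunitR a b).1) hr huvw hvr,
      fun _ hr hru => RelMonoid.mul_left_unit_of_mem_mul (fun a b c d => (hassoc a b c d).1)
        (fun a b => (hunitL a b).1) hr huvw hru⟩
end

section
/- Let G be a groupoid. Let X be the set of all morphisms of G, i.e., the sigma type of triples (a, b, f) with a, b objects of G and f : a ⟶ b. Define relations on X as follows: μ:((b₁,c₁,f),(a₂,b₂,g))↦(a₃,c₃,h) holds iff a₂ = a₃, b₂ = b₁, c₁ = c₃ and h = g ≫ f (the composite f ∘ g); η = ε = the set of identity morphisms {(a,a,id_a)}; and δ:h↦(f,g) holds iff μ:(f,g)↦h. Then (X;μ,η,δ,ε) is a Frobenius algebra in Rel, i.e., it satisfies associativity, the unit law, coassociativity, the counit law, and the Frobenius identity. -/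
/-! `groupoidMu` is the graph of the partial composition of morphisms and `groupoidDelta` is its
converse, so associativity and the unit law are those of the groupoid, and coassociativity and the
counit law are the same statements read backwards. The Frobenius identity says that whenever
`b ≫ a = z ≫ y`, the factorisations `b = z ≫ u`, `y = u ≫ a` and `a = v ≫ y`, `z = b ≫ v` exist:
invertibility forces `u = z⁻¹ ≫ b` and `v = a ≫ y⁻¹`. -/

open CategoryTheory

/-- The set of all morphisms of a groupoid `G`, as a sigma type of triples
`(a, b, f)` with `f : a ⟶ b`. -/
def GroupoidMor (G : Type*) [Groupoid G] : Type _ := Σ (a : G) (b : G), a ⟶ b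

/-- The multiplication relation: `μ:(f,g)↦h` iff (with `f : b₁ ⟶ c₁`,
`g : a₂ ⟶ b₂`, `h : a₃ ⟶ c₃`) we have `a₂ = a₃`, `b₂ = b₁`, `c₁ = c₃` and
`h = g ≫ f` (the composite `f ∘ g`), stated using `eqToHom` transports. -/
def groupoidMu {G : Type*} [Groupoid G] (f g h : GroupoidMor G) : Prop :=
  ∃ (ha : g.1 = h.1) (hb : g.2.1 = f.1) (hc : f.2.1 = h.2.1),
    h.2.2 = eqToHom ha.symm ≫ g.2.2 ≫ eqToHom hb ≫ f.2.2 ≫ eqToHom hc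

/-- Unit/counit elements: the identity morphisms `(a, a, 𝟙 a)`. -/
def groupoidEta (G : Type*) [Groupoid G] : Set (GroupoidMor G) :=
  {p | ∃ a : G, p = ⟨a, a, 𝟙 a⟩}

/-- The comultiplication relation: `δ:h↦(f,g)` iff `μ:(f,g)↦h`. -/
def groupoidDelta {G : Type*} [Groupoid G] (h f g : GroupoidMor G) : Prop :=
  groupoidMu f g h

section

variable {G : Type*} [Groupoid G]

theorem GroupoidMor.exists_iff {p : GroupoidMor G → Prop} :
    (∃ x, p x) ↔ ∃ (a b : G) (f : a ⟶ b), p ⟨a, b, f⟩ :=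
  ⟨fun ⟨⟨a, b, f⟩, h⟩ => ⟨a, b, f, h⟩, fun ⟨_, _, _, h⟩ => ⟨_, h⟩⟩

theorem exists_mem_groupoidEta_iff {p : GroupoidMor G → Prop} :
    (∃ r ∈ groupoidEta G, p r) ↔ ∃ a : G, p ⟨a, a, 𝟙 a⟩ :=
  ⟨fun ⟨_, ⟨a, ha⟩, h⟩ => ⟨a, ha ▸ h⟩, fun ⟨a, h⟩ => ⟨_, ⟨a, rfl⟩, h⟩⟩

theorem groupoidMu_mk_iff {a₁ a₂ b₁ b₂ c₁ c₂ : G} (f : a₁ ⟶ a₂) (g : b₁ ⟶ b₂) (h : c₁ ⟶ c₂) :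
    groupoidMu ⟨a₁, a₂, f⟩ ⟨b₁, b₂, g⟩ ⟨c₁, c₂, h⟩ ↔
      ∃ (ha : b₁ = c₁) (hb : b₂ = a₁) (hc : a₂ = c₂),
        h = eqToHom ha.symm ≫ g ≫ eqToHom hb ≫ f ≫ eqToHom hc :=
  Iff.rfl

theorem groupoidMu_assoc (a b c d : GroupoidMor G) :
    (∃ x, groupoidMu a b x ∧ groupoidMu x c d) ↔ (∃ y, groupoidMu b c y ∧ groupoidMu a y d) := by
  obtain ⟨a₁, a₂, A⟩ := a
  obtain ⟨b₁, b₂, B⟩ := b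
  obtain ⟨c₁, c₂, C⟩ := c
  obtain ⟨d₁, d₂, D⟩ := d
  simp only [GroupoidMor.exists_iff, groupoidMu_mk_iff]
  constructor
  · rintro ⟨x₁, x₂, X, ⟨rfl, rfl, rfl, rfl⟩, ⟨rfl, rfl, rfl, rfl⟩⟩
    exact ⟨_, _, C ≫ B, ⟨rfl, rfl, rfl, by simp⟩, ⟨rfl, rfl, rfl, by simp⟩⟩
  · rintro ⟨y₁, y₂, Y, ⟨rfl, rfl, rfl, rfl⟩, ⟨rfl, rfl, rfl, rfl⟩⟩
    exact ⟨_, _, B ≫ A, ⟨rfl, rfl, rfl, by simp⟩, ⟨rfl, rfl, rfl, by simp⟩⟩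

theorem groupoidMu_id_left (a b : GroupoidMor G) :
    (∃ r ∈ groupoidEta G, groupoidMu r a b) ↔ a = b := by
  refine ⟨?_, ?_⟩
  · obtain ⟨a₁, a₂, A⟩ := a
    obtain ⟨b₁, b₂, B⟩ := b
    simp only [exists_mem_groupoidEta_iff, groupoidMu_mk_iff]
    rintro ⟨_, rfl, rfl, rfl, rfl⟩
    simp only [eqToHom_refl, Category.id_comp, Category.comp_id]
    rfl
  · rintro rfl
    obtain ⟨a₁, a₂, A⟩ := a
    exact ⟨_, ⟨a₂, rfl⟩, rfl, rfl, rfl, by simp⟩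

theorem groupoidMu_id_right (a b : GroupoidMor G) :
    (∃ r ∈ groupoidEta G, groupoidMu a r b) ↔ a = b := by
  refine ⟨?_, ?_⟩
  · obtain ⟨a₁, a₂, A⟩ := a
    obtain ⟨b₁, b₂, B⟩ := b
    simp only [exists_mem_groupoidEta_iff, groupoidMu_mk_iff]
    rintro ⟨_, rfl, rfl, rfl, rfl⟩
    simp only [eqToHom_refl, Category.id_comp, Category.comp_id]
    rfl
  · rintro rfl
    obtain ⟨a₁, a₂, A⟩ := a
    exact ⟨_, ⟨a₁, rfl⟩, rfl, rfl, rfl, by simp⟩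

theorem groupoidMu_frobenius_left (a b y z : GroupoidMor G) :
    (∃ c, groupoidMu a b c ∧ groupoidMu y z c) ↔ (∃ u, groupoidMu u z b ∧ groupoidMu a u y) := by
  obtain ⟨a₁, a₂, A⟩ := a
  obtain ⟨b₁, b₂, B⟩ := b
  obtain ⟨y₁, y₂, Y⟩ := y
  obtain ⟨z₁, z₂, Z⟩ := z
  simp only [GroupoidMor.exists_iff, groupoidMu_mk_iff]
  constructor
  · rintro ⟨c₁, c₂, C, ⟨rfl, rfl, rfl, rfl⟩, ⟨rfl, rfl, rfl, hBA⟩⟩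
    simp only [eqToHom_refl, Category.id_comp, Category.comp_id] at hBA
    exact ⟨_, _, inv Z ≫ B, ⟨rfl, rfl, rfl, by simp⟩, ⟨rfl, rfl, rfl, by simp [hBA]⟩⟩
  · rintro ⟨u₁, u₂, U, ⟨rfl, rfl, rfl, rfl⟩, ⟨rfl, rfl, rfl, rfl⟩⟩
    exact ⟨_, _, Z ≫ U ≫ A, ⟨rfl, rfl, rfl, by simp⟩, ⟨rfl, rfl, rfl, by simp⟩⟩

theorem groupoidMu_frobenius_right (a b y z : GroupoidMor G) :
    (∃ c, groupoidMu a b c ∧ groupoidMu y z c) ↔ (∃ v, groupoidMu y v a ∧ groupoidMu v b z) := by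
  obtain ⟨a₁, a₂, A⟩ := a
  obtain ⟨b₁, b₂, B⟩ := b
  obtain ⟨y₁, y₂, Y⟩ := y
  obtain ⟨z₁, z₂, Z⟩ := z
  simp only [GroupoidMor.exists_iff, groupoidMu_mk_iff]
  constructor
  · rintro ⟨c₁, c₂, C, ⟨rfl, rfl, rfl, rfl⟩, ⟨rfl, rfl, rfl, hBA⟩⟩
    simp only [eqToHom_refl, Category.id_comp, Category.comp_id] at hBA
    exact ⟨_, _, A ≫ inv Y, ⟨rfl, rfl, rfl, by simp⟩, ⟨rfl, rfl, rfl, by simp [reassoc_of% hBA]⟩⟩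
  · rintro ⟨v₁, v₂, V, ⟨rfl, rfl, rfl, rfl⟩, ⟨rfl, rfl, rfl, rfl⟩⟩
    exact ⟨_, _, B ≫ V ≫ Y, ⟨rfl, rfl, rfl, by simp⟩, ⟨rfl, rfl, rfl, by simp⟩⟩

end

/-- the morphisms of a groupoid, with μ given by composition,
η = ε = identities, and δ the converse of μ, form a Frobenius algebra in Rel. -/
theorem groupoid_is_relFrobenius (G : Type*) [Groupoid G] :
    -- associativity
    (∀ a b c d : GroupoidMor G,
      (∃ x, groupoidMu a b x ∧ groupoidMu x c d) ↔
      (∃ y, groupoidMu b c y ∧ groupoidMu a y d)) ∧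
    -- unit law
    (∀ a b : GroupoidMor G, (∃ r ∈ groupoidEta G, groupoidMu r a b) ↔ a = b) ∧
    (∀ a b : GroupoidMor G, (∃ r ∈ groupoidEta G, groupoidMu a r b) ↔ a = b) ∧
    -- coassociativity
    (∀ a x y z : GroupoidMor G,
      (∃ u, groupoidDelta a u z ∧ groupoidDelta u x y) ↔
      (∃ v, groupoidDelta a x v ∧ groupoidDelta v y z)) ∧
    -- counit law
    (∀ a b : GroupoidMor G, (∃ e ∈ groupoidEta G, groupoidDelta a e b) ↔ a = b) ∧
    (∀ a b : GroupoidMor G, (∃ e ∈ groupoidEta G, groupoidDelta a b e) ↔ a = b) ∧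
    -- Frobenius identity
    (∀ a b y z : GroupoidMor G,
      ((∃ c, groupoidMu a b c ∧ groupoidDelta c y z) ↔
        (∃ u, groupoidDelta b u z ∧ groupoidMu a u y)) ∧
      ((∃ c, groupoidMu a b c ∧ groupoidDelta c y z) ↔
        (∃ v, groupoidDelta a y v ∧ groupoidMu v b z))) :=
  ⟨groupoidMu_assoc, groupoidMu_id_left, groupoidMu_id_right,
    fun a x y z => by simpa only [groupoidDelta, and_comm] using groupoidMu_assoc x y z a,
    fun a b => (groupoidMu_id_left b a).trans eq_comm,
    fun a b => (groupoidMu_id_right b a).trans eq_comm,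
    fun a b y z => ⟨groupoidMu_frobenius_left a b y z, groupoidMu_frobenius_right a b y z⟩⟩
end

section
/- Let E be a set with a ternary relation p (write a⊕b≃c for p(a,b,c)) and distinguished elements 0, 1 ∈ E satisfying: (functionality) a⊕b≃c₁ and a⊕b≃c₂ imply c₁=c₂; (commutativity) a⊕b≃c implies b⊕a≃c; (associativity) for all a,b,c,d, (∃x, a⊕b≃x and x⊕c≃d) iff (∃y, b⊕c≃y and a⊕y≃d); (zero) a⊕0≃a for all a; (orthocomplement) for every a there is a unique a' ∈ E with a⊕a'≃1; (zero-one law) if a⊕1≃b for some b, then a=0. (These are the axioms of an effect algebra.) Define relations on E by: μ:(a,b)↦c iff a⊕b≃c; η = {0}; ε = {1}; and δ:a↦(b,c) iff there exist b', c', u ∈ E with b⊕b'≃1, c⊕c'≃1, b'⊕c'≃u and a⊕u≃1 (i.e., a = (b'⊕c')'). Then (E;μ,η,δ,ε) is a Frobenius algebra in Rel, i.e., it satisfies associativity, the unit law, coassociativity, the counit law, and the Frobenius identity. -/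
/-!
The orthocomplement `a ↦ a'` is an involution, and `δ : a ↦ (b, c)` holds exactly when
`b' ⊕ c' ≃ a'`: the comultiplication is the multiplication transported along `'`, so
coassociativity and the counit law are associativity and the unit law in disguise.
The rotation `a ⊕ b ≃ c ↔ b ⊕ c' ≃ a'` (both say `a ⊕ b ⊕ c' ≃ 1`) rewrites both
Frobenius equivalences into instances of associativity and commutativity.
-/

namespace EffectAlgebraRel

variable {E : Type*} {p : E → E → E → Prop} {z o : E} {compl : E → E} {a b c d : E}

theorem rel_zero_iff (hfun : ∀ a b c₁ c₂ : E, p a b c₁ → p a b c₂ → c₁ = c₂)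
    (hzero : ∀ a : E, p a z a) : p a z b ↔ a = b :=
  ⟨hfun a z a b (hzero a), fun h => h ▸ hzero a⟩

theorem zero_rel_iff (hfun : ∀ a b c₁ c₂ : E, p a b c₁ → p a b c₂ → c₁ = c₂)
    (hcomm : ∀ a b c : E, p a b c → p b a c) (hzero : ∀ a : E, p a z a) :
    p z a b ↔ a = b :=
  ⟨fun h => (rel_zero_iff hfun hzero).1 (hcomm _ _ _ h), fun h => hcomm _ _ _ (h ▸ hzero a)⟩

theorem rel_comm_iff (hcomm : ∀ a b c : E, p a b c → p b a c) : p a b c ↔ p b a c :=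
  ⟨hcomm a b c, hcomm b a c⟩

theorem exists_rel_rel_right_comm (hcomm : ∀ a b c : E, p a b c → p b a c)
    (hassoc : ∀ a b c d : E, (∃ x, p a b x ∧ p x c d) ↔ (∃ y, p b c y ∧ p a y d)) :
    (∃ x, p a b x ∧ p x c d) ↔ ∃ y, p a c y ∧ p y b d :=
  (hassoc a b c d).trans <|
    (exists_congr fun _ => and_congr_left' (rel_comm_iff hcomm)).trans (hassoc a c b d).symm

theorem compl_involutive (hcomm : ∀ a b c : E, p a b c → p b a c)
    (hcompl : ∀ a b : E, p a b o ↔ b = compl a) : Function.Involutive compl := fun a =>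
  ((hcompl _ _).1 (hcomm _ _ _ ((hcompl a _).2 rfl))).symm

theorem compl_eq_of_rel_zero (hcompl : ∀ a b : E, p a b o ↔ b = compl a)
    (hzero : ∀ a : E, p a z a) : compl o = z :=
  ((hcompl o z).1 (hzero o)).symm

theorem rel_iff_rel_compl (hcomm : ∀ a b c : E, p a b c → p b a c)
    (hassoc : ∀ a b c d : E, (∃ x, p a b x ∧ p x c d) ↔ (∃ y, p b c y ∧ p a y d))
    (hcompl : ∀ a b : E, p a b o ↔ b = compl a) : p a b c ↔ p b (compl c) (compl a) := by
  constructor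
  · intro h
    obtain ⟨y, hy, hay⟩ := (hassoc a b (compl c) o).1 ⟨c, h, (hcompl c _).2 rfl⟩
    rwa [← (hcompl a y).1 hay]
  · intro h
    obtain ⟨x, hx, hxo⟩ := (hassoc a b (compl c) o).2 ⟨compl a, h, (hcompl a _).2 rfl⟩
    rwa [(compl_involutive hcomm hcompl).injective ((hcompl x _).1 hxo).symm] at hx

theorem rel_compl_compl_iff (hcomm : ∀ a b c : E, p a b c → p b a c)
    (hassoc : ∀ a b c d : E, (∃ x, p a b x ∧ p x c d) ↔ (∃ y, p b c y ∧ p a y d))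
    (hcompl : ∀ a b : E, p a b o ↔ b = compl a) :
    p (compl a) (compl b) (compl c) ↔ p c (compl b) a :=
  ((rel_iff_rel_compl hcomm hassoc hcompl).trans (rel_comm_iff hcomm)).symm

theorem rel_compl_comm (hcomm : ∀ a b c : E, p a b c → p b a c)
    (hassoc : ∀ a b c d : E, (∃ x, p a b x ∧ p x c d) ↔ (∃ y, p b c y ∧ p a y d))
    (hcompl : ∀ a b : E, p a b o ↔ b = compl a) : p a (compl b) c ↔ p a (compl c) b :=
  calc p a (compl b) c ↔ p (compl c) (compl b) (compl a) :=
        (rel_compl_compl_iff hcomm hassoc hcompl).symm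
    _ ↔ p (compl b) (compl c) (compl a) := rel_comm_iff hcomm
    _ ↔ p a (compl c) b := rel_compl_compl_iff hcomm hassoc hcompl

theorem comul_iff (hcompl : ∀ a b : E, p a b o ↔ b = compl a) :
    (∃ b' c' u, p b b' o ∧ p c c' o ∧ p b' c' u ∧ p a u o) ↔
      p (compl b) (compl c) (compl a) := by
  simp only [hcompl, exists_and_left, exists_eq_left, exists_eq_right]

theorem comul_coassoc (hcomm : ∀ a b c : E, p a b c → p b a c)
    (hassoc : ∀ a b c d : E, (∃ x, p a b x ∧ p x c d) ↔ (∃ y, p b c y ∧ p a y d))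
    (hcompl : ∀ a b : E, p a b o ↔ b = compl a) :
    (∃ u, p (compl u) (compl d) (compl a) ∧ p (compl b) (compl c) (compl u)) ↔
      ∃ t, p (compl b) (compl t) (compl a) ∧ p (compl c) (compl d) (compl t) := by
  have hsurj := (compl_involutive hcomm hcompl).surjective
  calc (∃ u, p (compl u) (compl d) (compl a) ∧ p (compl b) (compl c) (compl u))
      ↔ ∃ x, p (compl b) (compl c) x ∧ p x (compl d) (compl a) :=
        (exists_congr fun _ => and_comm).trans
          (hsurj.exists (p := fun x => p (compl b) (compl c) x ∧ p x (compl d) (compl a))).symm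
    _ ↔ ∃ y, p (compl c) (compl d) y ∧ p (compl b) y (compl a) := hassoc _ _ _ _
    _ ↔ _ := (exists_congr fun _ => and_comm).trans
        (hsurj.exists (p := fun y => p (compl b) y (compl a) ∧ p (compl c) (compl d) y))

theorem frobenius_comul_left (hcomm : ∀ a b c : E, p a b c → p b a c)
    (hassoc : ∀ a b c d : E, (∃ x, p a b x ∧ p x c d) ↔ (∃ y, p b c y ∧ p a y d))
    (hcompl : ∀ a b : E, p a b o ↔ b = compl a) :
    (∃ x, p a b x ∧ p (compl c) (compl d) (compl x)) ↔
      ∃ u, p (compl u) (compl d) (compl b) ∧ p a u c := by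
  simp only [rel_compl_compl_iff hcomm hassoc hcompl]
  exact hassoc a b (compl d) c

theorem frobenius_comul_right (hcomm : ∀ a b c : E, p a b c → p b a c)
    (hassoc : ∀ a b c d : E, (∃ x, p a b x ∧ p x c d) ↔ (∃ y, p b c y ∧ p a y d))
    (hcompl : ∀ a b : E, p a b o ↔ b = compl a) :
    (∃ x, p a b x ∧ p (compl c) (compl d) (compl x)) ↔
      ∃ v, p (compl c) (compl v) (compl a) ∧ p v b d := by
  simp only [rel_compl_compl_iff hcomm hassoc hcompl]
  calc (∃ x, p a b x ∧ p x (compl d) c) ↔ ∃ x, p a b x ∧ p x (compl c) d :=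
        exists_congr fun _ => and_congr_right' (rel_compl_comm hcomm hassoc hcompl)
    _ ↔ ∃ v, p a (compl c) v ∧ p v b d := exists_rel_rel_right_comm hcomm hassoc
    _ ↔ ∃ v, p a (compl v) c ∧ p v b d :=
        exists_congr fun _ => and_congr_left' (rel_compl_comm hcomm hassoc hcompl)

end EffectAlgebraRel

open EffectAlgebraRel in
theorem effectAlgebra_is_relFrobenius_general
    {E : Type*} (p : E → E → E → Prop) (z o : E)
    -- effect algebra axioms
    (hfun : ∀ a b c₁ c₂ : E, p a b c₁ → p a b c₂ → c₁ = c₂)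
    (hcomm : ∀ a b c : E, p a b c → p b a c)
    (hassocEA : ∀ a b c d : E,
      (∃ x, p a b x ∧ p x c d) ↔ (∃ y, p b c y ∧ p a y d))
    (hzero : ∀ a : E, p a z a)
    (horth : ∀ a : E, ∃! a' : E, p a a' o) :
    -- the induced structure: μ := p, η := {z}, ε := {o},
    -- δ a b c := ∃ b' c' u, p b b' o ∧ p c c' o ∧ p b' c' u ∧ p a u o
    (∀ a b c d : E,
      (∃ x, p a b x ∧ p x c d) ↔ (∃ y, p b c y ∧ p a y d)) ∧
    -- unit law
    (∀ a b : E, (∃ r ∈ ({z} : Set E), p r a b) ↔ a = b) ∧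
    (∀ a b : E, (∃ r ∈ ({z} : Set E), p a r b) ↔ a = b) ∧
    -- coassociativity
    (∀ a x y w : E,
      (∃ u, (∃ u' w' v, p u u' o ∧ p w w' o ∧ p u' w' v ∧ p a v o) ∧
            (∃ x' y' v, p x x' o ∧ p y y' o ∧ p x' y' v ∧ p u v o)) ↔
      (∃ t, (∃ x' t' v, p x x' o ∧ p t t' o ∧ p x' t' v ∧ p a v o) ∧
            (∃ y' w' v, p y y' o ∧ p w w' o ∧ p y' w' v ∧ p t v o))) ∧
    -- counit law
    (∀ a b : E,
      (∃ e ∈ ({o} : Set E),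
        ∃ e' b' u, p e e' o ∧ p b b' o ∧ p e' b' u ∧ p a u o) ↔ a = b) ∧
    (∀ a b : E,
      (∃ e ∈ ({o} : Set E),
        ∃ b' e' u, p b b' o ∧ p e e' o ∧ p b' e' u ∧ p a u o) ↔ a = b) ∧
    -- Frobenius identity
    (∀ a b y w : E,
      ((∃ c, p a b c ∧ ∃ y' w' u, p y y' o ∧ p w w' o ∧ p y' w' u ∧ p c u o) ↔
        (∃ u, (∃ u' w' v, p u u' o ∧ p w w' o ∧ p u' w' v ∧ p b v o) ∧
          p a u y)) ∧
      ((∃ c, p a b c ∧ ∃ y' w' u, p y y' o ∧ p w w' o ∧ p y' w' u ∧ p c u o) ↔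
        (∃ v, (∃ y' v' t, p y y' o ∧ p v v' o ∧ p y' v' t ∧ p a t o) ∧
          p v b w))) := by
  obtain ⟨compl, hcompl⟩ : ∃ compl : E → E, ∀ a b, p a b o ↔ b = compl a :=
    ⟨fun a => (horth a).exists.choose, fun a b =>
      ⟨fun h => (horth a).unique h (horth a).exists.choose_spec,
        fun h => h ▸ (horth a).exists.choose_spec⟩⟩
  have hinj := (compl_involutive hcomm hcompl).injective
  have hcompl_o := compl_eq_of_rel_zero hcompl hzero
  simp only [Set.mem_singleton_iff, exists_eq_left, comul_iff hcompl, hcompl_o]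
  refine ⟨hassocEA, fun a b => zero_rel_iff hfun hcomm hzero,
    fun a b => rel_zero_iff hfun hzero, fun a x y w => comul_coassoc hcomm hassocEA hcompl,
    fun a b => ?_, fun a b => ?_, fun a b y w =>
      ⟨frobenius_comul_left hcomm hassocEA hcompl, frobenius_comul_right hcomm hassocEA hcompl⟩⟩
  · rw [zero_rel_iff hfun hcomm hzero, hinj.eq_iff, eq_comm]
  · rw [rel_zero_iff hfun hzero, hinj.eq_iff, eq_comm]

/-- an effect algebra (E;⊕,0,1), with μ:(a,b)↦c iff a⊕b≃c,
η = {0}, ε = {1}, and δ:a↦(b,c) iff a = (b'⊕c')', is a Frobenius algebra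
in Rel. -/
theorem effectAlgebra_is_relFrobenius
    {E : Type*} (p : E → E → E → Prop) (z o : E)
    -- effect algebra axioms
    (hfun : ∀ a b c₁ c₂ : E, p a b c₁ → p a b c₂ → c₁ = c₂)
    (hcomm : ∀ a b c : E, p a b c → p b a c)
    (hassocEA : ∀ a b c d : E,
      (∃ x, p a b x ∧ p x c d) ↔ (∃ y, p b c y ∧ p a y d))
    (hzero : ∀ a : E, p a z a)
    (horth : ∀ a : E, ∃! a' : E, p a a' o)
    (hzeroOne : ∀ a b : E, p a o b → a = z) :
    -- the induced structure: μ := p, η := {z}, ε := {o},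
    -- δ a b c := ∃ b' c' u, p b b' o ∧ p c c' o ∧ p b' c' u ∧ p a u o
    (∀ a b c d : E,
      (∃ x, p a b x ∧ p x c d) ↔ (∃ y, p b c y ∧ p a y d)) ∧
    -- unit law
    (∀ a b : E, (∃ r ∈ ({z} : Set E), p r a b) ↔ a = b) ∧
    (∀ a b : E, (∃ r ∈ ({z} : Set E), p a r b) ↔ a = b) ∧
    -- coassociativity
    (∀ a x y w : E,
      (∃ u, (∃ u' w' v, p u u' o ∧ p w w' o ∧ p u' w' v ∧ p a v o) ∧
            (∃ x' y' v, p x x' o ∧ p y y' o ∧ p x' y' v ∧ p u v o)) ↔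
      (∃ t, (∃ x' t' v, p x x' o ∧ p t t' o ∧ p x' t' v ∧ p a v o) ∧
            (∃ y' w' v, p y y' o ∧ p w w' o ∧ p y' w' v ∧ p t v o))) ∧
    -- counit law
    (∀ a b : E,
      (∃ e ∈ ({o} : Set E),
        ∃ e' b' u, p e e' o ∧ p b b' o ∧ p e' b' u ∧ p a u o) ↔ a = b) ∧
    (∀ a b : E,
      (∃ e ∈ ({o} : Set E),
        ∃ b' e' u, p b b' o ∧ p e e' o ∧ p b' e' u ∧ p a u o) ↔ a = b) ∧
    -- Frobenius identity
    (∀ a b y w : E,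
      ((∃ c, p a b c ∧ ∃ y' w' u, p y y' o ∧ p w w' o ∧ p y' w' u ∧ p c u o) ↔
        (∃ u, (∃ u' w' v, p u u' o ∧ p w w' o ∧ p u' w' v ∧ p b v o) ∧
          p a u y)) ∧
      ((∃ c, p a b c ∧ ∃ y' w' u, p y y' o ∧ p w w' o ∧ p y' w' u ∧ p c u o) ↔
        (∃ v, (∃ y' v' t, p y y' o ∧ p v v' o ∧ p y' v' t ∧ p a t o) ∧
          p v b w))) :=
  effectAlgebra_is_relFrobenius_general p z o hfun hcomm hassocEA hzero horth
end
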